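/- arXiv:2106.06508 — 10 statements merged into one kernel-verified Lean document; each statement's English description precedes it below -/
import Mathlib

section
/- Let 0 ≤ γ < 1. Then I − P^β = (I − γ·P·(I−B))⁻¹·(I − γ·P). -/
open Matrix

/-!
Row-stochasticity of `P` and `0 ≤ β ≤ 1` give `‖γ • P * (1 - B)‖∞ ≤ γ < 1`, so
`M = 1 - γ • P * (1 - B)` is invertible by the Neumann series. Then `1 - γ • P = M - γ • P * B`,
and multiplying by `M⁻¹` gives the identity.
-/

attribute [local instance] Matrix.linftyOpNormedRing Matrix.linftyOpNormedAlgebra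

theorem Matrix.linfty_opNorm_le_one_of_mem_rowStochastic {n : Type*} [Fintype n] [DecidableEq n]
    {M : Matrix n n ℝ} (hM : M ∈ rowStochastic ℝ n) : ‖M‖ ≤ 1 := by
  rw [← coe_nnnorm, NNReal.coe_le_one, linfty_opNNNorm_def]
  refine Finset.sup_le fun i _ => ?_
  rw [← NNReal.coe_le_coe, NNReal.coe_sum]
  simp_rw [coe_nnnorm, Real.norm_of_nonneg (nonneg_of_mem_rowStochastic hM),
    sum_row_of_mem_rowStochastic hM, NNReal.coe_one, le_refl]

theorem Matrix.linfty_opNorm_one_sub_diagonal_le_one {n : Type*} [Fintype n] [DecidableEq n]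
    {β : n → ℝ} (hβ0 : ∀ i, 0 ≤ β i) (hβ1 : ∀ i, β i ≤ 1) : ‖1 - diagonal β‖ ≤ 1 := by
  rw [← diagonal_one, diagonal_sub, linfty_opNorm_diagonal, pi_norm_le_iff_of_nonneg zero_le_one]
  intro i
  rw [Real.norm_of_nonneg (by linarith [hβ1 i])]
  linarith [hβ0 i]

theorem Matrix.one_sub_smul_inv_mul_mul_eq_inv_mul {n R : Type*} [Fintype n] [DecidableEq n]
    [CommRing R] (γ : R) (P B : Matrix n n R) (hM : IsUnit (1 - γ • (P * (1 - B))).det) :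
    1 - γ • ((1 - γ • (P * (1 - B)))⁻¹ * P * B) = (1 - γ • (P * (1 - B)))⁻¹ * (1 - γ • P) := by
  have hsplit : (1 : Matrix n n R) - γ • P = (1 - γ • (P * (1 - B))) - γ • (P * B) := by
    rw [mul_sub, mul_one, smul_sub]
    abel
  rw [hsplit, Matrix.mul_sub (1 - γ • (P * (1 - B)))⁻¹, nonsing_inv_mul _ hM, Matrix.mul_smul,
    mul_assoc]

theorem stmt_2_general {S : Type*} [Fintype S] [DecidableEq S]
    (P : Matrix S S ℝ) (hP0 : ∀ s s', 0 ≤ P s s') (hP1 : ∀ s, ∑ s', P s s' = 1)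
    (β : S → ℝ) (hβ0 : ∀ s, 0 ≤ β s) (hβ1 : ∀ s, β s ≤ 1)
    (γ : ℝ) (hγ0 : 0 ≤ γ) (hγ1 : γ < 1) :
    let B := diagonal β
    let Pβ := γ • ((1 - γ • (P * (1 - B)))⁻¹ * P * B)
    1 - Pβ = (1 - γ • (P * (1 - B)))⁻¹ * (1 - γ • P) := by
  intro B Pβ
  have hP : P ∈ rowStochastic ℝ S := mem_rowStochastic_iff_sum.mpr ⟨hP0, hP1⟩
  have hcontr : ‖γ • (P * (1 - B))‖ < 1 :=
    calc ‖γ • (P * (1 - B))‖ ≤ γ * (‖P‖ * ‖1 - B‖) := by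
          rw [norm_smul, Real.norm_of_nonneg hγ0]
          gcongr
          exact linfty_opNorm_mul P (1 - B)
      _ ≤ γ * (1 * 1) := by
          gcongr
          · exact linfty_opNorm_le_one_of_mem_rowStochastic hP
          · exact linfty_opNorm_one_sub_diagonal_le_one hβ0 hβ1
      _ < 1 := by linarith
  have hM : IsUnit (1 - γ • (P * (1 - B))) := (Units.oneSub _ hcontr).isUnit
  exact one_sub_smul_inv_mul_mul_eq_inv_mul γ P B ((isUnit_iff_isUnit_det _).mp hM)

/-- `I − P^β = (I − γ·P·(I−B))⁻¹·(I − γ·P)` where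
`P^β = γ·(I − γ·P·(I−B))⁻¹·P·B`. -/
theorem stmt_2 {S : Type*} [Fintype S] [Nonempty S] [DecidableEq S]
    (P : Matrix S S ℝ) (hP0 : ∀ s s', 0 ≤ P s s') (hP1 : ∀ s, ∑ s', P s s' = 1)
    (β : S → ℝ) (hβ0 : ∀ s, 0 ≤ β s) (hβ1 : ∀ s, β s ≤ 1)
    (γ : ℝ) (hγ0 : 0 ≤ γ) (hγ1 : γ < 1) :
    let B := diagonal β
    let Pβ := γ • ((1 - γ • (P * (1 - B)))⁻¹ * P * B)
    1 - Pβ = (1 - γ • (P * (1 - B)))⁻¹ * (1 - γ • P) :=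
  stmt_2_general P hP0 hP1 β hβ0 hβ1 γ hγ0 hγ1
end

section
/- Let 0 ≤ γ < 1. Then every entry of P^β is nonnegative, and every row sum of P^β is at most γ; in particular, P^β is a sub-stochastic matrix. -/
/-!
Write `M = γ P (I - B)`. It is entrywise nonnegative with row sums at most `γ < 1`, so `I - M`
satisfies a discrete minimum principle: `(I - M) x ≥ 0` forces `x ≥ 0` (look at a minimal
coordinate of `x`). Applied to `x` in the kernel, to the columns of `N = (I - M)⁻¹` and to
`N 𝟙 - 𝟙`, it gives invertibility, `N ≥ 0` and `N 𝟙 ≥ 𝟙`; hence `P^β = N (γ P) B ≥ 0`. For the row sums, `N (I - M) = I` rewrites `P^β` as `I - N (I - γ P)`,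
so `P^β 𝟙 = 𝟙 - (1 - γ) N 𝟙 ≤ γ 𝟙`.
-/

open Matrix Finset

theorem mul_mul_eq_one_sub_mul_one_sub {R : Type*} [Ring R] {N Q B : R}
    (h : N * (1 - Q * (1 - B)) = 1) : N * Q * B = 1 - N * (1 - Q) :=
  calc N * Q * B = N * (1 - Q * (1 - B)) - N * (1 - Q) := by noncomm_ring
    _ = 1 - N * (1 - Q) := by rw [h]

namespace Matrix

variable {n : Type*} [Fintype n]

theorem sum_apply_eq_mulVec_one_apply {m R : Type*} [NonAssocSemiring R] (A : Matrix m n R)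
    (i : m) : ∑ j, A i j = (A *ᵥ 1) i := by
  simp [mulVec, dotProduct]

theorem sum_one_sub_mul_one_sub_apply {R : Type*} [CommRing R] [DecidableEq n]
    {N Q : Matrix n n R} {γ : R} (hQ : ∀ i, ∑ j, Q i j = γ) (i : n) :
    ∑ j, (1 - N * (1 - Q)) i j = 1 - (1 - γ) * ∑ j, N i j := by
  have hQ1 : Q *ᵥ 1 = γ • 1 := funext fun k => by simp [← sum_apply_eq_mulVec_one_apply, hQ]
  simp only [sum_apply_eq_mulVec_one_apply, sub_mulVec, one_mulVec, ← mulVec_mulVec, hQ1,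
    mulVec_sub, mulVec_smul, Pi.sub_apply, Pi.smul_apply, Pi.one_apply, smul_eq_mul]
  ring

variable {K : Type*} [Field K] [LinearOrder K] [IsStrictOrderedRing K]

theorem mul_apply_nonneg {A C : Matrix n n K} (hA : ∀ i j, 0 ≤ A i j) (hC : ∀ i j, 0 ≤ C i j)
    (i j : n) : 0 ≤ (A * C) i j :=
  sum_nonneg fun k _ => mul_nonneg (hA i k) (hC k j)

variable [DecidableEq n]

theorem mul_diagonal_apply_nonneg {A : Matrix n n K} {d : n → K} (hA : ∀ i j, 0 ≤ A i j)
    (hd : ∀ j, 0 ≤ d j) (i j : n) : 0 ≤ (A * diagonal d) i j := by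
  rw [mul_diagonal]
  exact mul_nonneg (hA i j) (hd j)

theorem sum_mul_diagonal_apply_le {A : Matrix n n K} {d : n → K} (hA : ∀ i j, 0 ≤ A i j)
    (hd : ∀ j, d j ≤ 1) (i : n) : ∑ j, (A * diagonal d) i j ≤ ∑ j, A i j :=
  sum_le_sum fun j _ => by
    rw [mul_diagonal]
    exact mul_le_of_le_one_right (hA i j) (hd j)

section Substochastic

variable {A : Matrix n n K} {c : K}
  (hA : ∀ i j, 0 ≤ A i j) (hrow : ∀ i, ∑ j, A i j ≤ c) (hc : c < 1)
include hA hrow hc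

theorem nonneg_of_one_sub_mulVec_nonneg {x : n → K} (hx : 0 ≤ (1 - A) *ᵥ x) : 0 ≤ x := by
  intro i
  obtain ⟨i₀, -, hmin⟩ := exists_min_image univ x ⟨i, mem_univ i⟩
  suffices 0 ≤ x i₀ from this.trans (hmin i (mem_univ i))
  rcases le_or_gt 0 (x i₀) with h | hneg
  · exact h
  have hx₀ : ∑ j, A i₀ j * x j ≤ x i₀ := by
    have := hx i₀
    rw [sub_mulVec, one_mulVec, Pi.zero_apply, Pi.sub_apply, sub_nonneg] at this
    simpa [mulVec, dotProduct] using this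
  have : c * x i₀ ≤ x i₀ := calc
    c * x i₀ ≤ (∑ j, A i₀ j) * x i₀ := mul_le_mul_of_nonpos_right (hrow i₀) hneg.le
    _ = ∑ j, A i₀ j * x i₀ := sum_mul ..
    _ ≤ ∑ j, A i₀ j * x j :=
      sum_le_sum fun j _ => mul_le_mul_of_nonneg_left (hmin j (mem_univ j)) (hA i₀ j)
    _ ≤ x i₀ := hx₀
  nlinarith

theorem isUnit_det_one_sub : IsUnit (1 - A).det := by
  refine (isUnit_iff_isUnit_det _).mp (mulVec_injective_iff_isUnit.mp fun x y hxy => ?_)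
  have h₁ := nonneg_of_one_sub_mulVec_nonneg hA hrow hc (x := x - y)
    (by rw [mulVec_sub, hxy, sub_self])
  have h₂ := nonneg_of_one_sub_mulVec_nonneg hA hrow hc (x := y - x)
    (by rw [mulVec_sub, hxy, sub_self])
  exact le_antisymm (sub_nonneg.mp h₂) (sub_nonneg.mp h₁)

theorem inv_one_sub_apply_nonneg (i j : n) : 0 ≤ (1 - A)⁻¹ i j := by
  have := nonneg_of_one_sub_mulVec_nonneg hA hrow hc (x := (1 - A)⁻¹ *ᵥ Pi.single j 1) <| by
    rw [mulVec_mulVec, mul_nonsing_inv _ (isUnit_det_one_sub hA hrow hc), one_mulVec]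
    exact Pi.single_nonneg.mpr zero_le_one
  simpa [mulVec_single_one] using this i

theorem one_le_sum_inv_one_sub_apply (i : n) : 1 ≤ ∑ j, (1 - A)⁻¹ i j := by
  have := nonneg_of_one_sub_mulVec_nonneg hA hrow hc (x := (1 - A)⁻¹ *ᵥ 1 - 1) <| by
    rw [mulVec_sub, mulVec_mulVec, mul_nonsing_inv _ (isUnit_det_one_sub hA hrow hc), one_mulVec,
      sub_mulVec, one_mulVec, sub_sub_cancel]
    intro k
    simpa [← sum_apply_eq_mulVec_one_apply] using sum_nonneg fun j _ => hA k j
  simpa [sum_apply_eq_mulVec_one_apply] using this i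

end Substochastic

end Matrix

theorem stmt_3_general {S : Type*} [Fintype S] [DecidableEq S]
    (P : Matrix S S ℝ) (hP0 : ∀ s s', 0 ≤ P s s') (hP1 : ∀ s, ∑ s', P s s' = 1)
    (β : S → ℝ) (hβ0 : ∀ s, 0 ≤ β s) (hβ1 : ∀ s, β s ≤ 1)
    (γ : ℝ) (hγ0 : 0 ≤ γ) (hγ1 : γ < 1) :
    let B := diagonal β
    let Pβ := γ • ((1 - γ • (P * (1 - B)))⁻¹ * P * B)
    (∀ s s', 0 ≤ Pβ s s') ∧ (∀ s, ∑ s', Pβ s s' ≤ γ) := by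
  intro B Pβ
  set Q : Matrix S S ℝ := γ • P
  have hQ0 : ∀ s s', 0 ≤ Q s s' := fun s s' => mul_nonneg hγ0 (hP0 s s')
  have hQ1 : ∀ s, ∑ s', Q s s' = γ := fun s => by simp [Q, ← mul_sum, hP1]
  have hB : 1 - B = diagonal fun s => 1 - β s := by rw [← diagonal_one, diagonal_sub]
  have hM0 : ∀ s s', 0 ≤ (Q * (1 - B)) s s' :=
    hB ▸ mul_diagonal_apply_nonneg hQ0 fun s => sub_nonneg.mpr (hβ1 s)
  have hM1 : ∀ s, ∑ s', (Q * (1 - B)) s s' ≤ γ := fun s =>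
    hB ▸ (sum_mul_diagonal_apply_le hQ0 (fun s => sub_le_self _ (hβ0 s)) s).trans_eq (hQ1 s)
  have hPβ : Pβ = (1 - Q * (1 - B))⁻¹ * Q * B := by
    simp only [Pβ, Q, smul_mul_assoc, mul_smul_comm]
  refine ⟨fun s s' => ?_, fun s => ?_⟩
  · rw [hPβ]
    exact mul_diagonal_apply_nonneg
      (mul_apply_nonneg (inv_one_sub_apply_nonneg hM0 hM1 hγ1) hQ0) hβ0 s s'
  · rw [hPβ, mul_mul_eq_one_sub_mul_one_sub (nonsing_inv_mul _ (isUnit_det_one_sub hM0 hM1 hγ1)),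
      sum_one_sub_mul_one_sub_apply hQ1]
    nlinarith [one_le_sum_inv_one_sub_apply hM0 hM1 hγ1 s]

/-- every entry of `P^β` is nonnegative and every row sum of `P^β`
is at most `γ`; in particular `P^β` is sub-stochastic. -/
theorem stmt_3 {S : Type*} [Fintype S] [Nonempty S] [DecidableEq S]
    (P : Matrix S S ℝ) (hP0 : ∀ s s', 0 ≤ P s s') (hP1 : ∀ s, ∑ s', P s s' = 1)
    (β : S → ℝ) (hβ0 : ∀ s, 0 ≤ β s) (hβ1 : ∀ s, β s ≤ 1)
    (γ : ℝ) (hγ0 : 0 ≤ γ) (hγ1 : γ < 1) :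
    let B := diagonal β
    let Pβ := γ • ((1 - γ • (P * (1 - B)))⁻¹ * P * B)
    (∀ s s', 0 ≤ Pβ s s') ∧ (∀ s, ∑ s', Pβ s s' ≤ γ) :=
  stmt_3_general P hP0 hP1 β hβ0 hβ1 γ hγ0 hγ1
end

section
/- Let 0 ≤ γ < 1. Then every diagonal entry of the matrix I − P^β is at least 1 − γ (hence positive), and every row sum of I − P^β is at least 1 − γ (hence positive). -/
/-!
Write `X = γ P (I - B)`. It is entrywise nonnegative with row sums at most `γ < 1`, so a discrete
maximum principle makes `I - X` invertible with `N = (I - X)⁻¹ ≥ 0` and `N 𝟙 ≥ 𝟙`. Since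
`γ P B = (I - X) - (I - γ P)`, we get `I - P^β = N (I - γ P)`, whose row sums are
`(1 - γ) N 𝟙 ≥ 1 - γ`. As `P^β ≥ 0`, each diagonal entry of `I - P^β` dominates its row sum.
-/

open Matrix

namespace Matrix

variable {m n o R : Type*}

theorem mul_apply_nonneg_s4 [Fintype n] [Semiring R] [PartialOrder R] [IsOrderedRing R]
    {A : Matrix m n R} {B : Matrix n o R} (hA : ∀ i j, 0 ≤ A i j) (hB : ∀ i j, 0 ≤ B i j)
    (i : m) (k : o) : 0 ≤ (A * B) i k :=
  Finset.sum_nonneg fun j _ => mul_nonneg (hA i j) (hB j k)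

theorem mulVec_one_apply [Fintype n] [NonAssocSemiring R] (A : Matrix m n R) (i : m) :
    (A *ᵥ 1) i = ∑ j, A i j :=
  dotProduct_one _

theorem diagonal_apply_nonneg [DecidableEq n] [Zero R] [Preorder R] {d : n → R}
    (hd : ∀ i, 0 ≤ d i) (i j : n) : 0 ≤ diagonal d i j := by
  rw [diagonal_apply]
  split_ifs
  exacts [hd i, le_rfl]

variable [Fintype n] [DecidableEq n]

theorem sum_one_sub_apply_le [Ring R] [PartialOrder R] [IsOrderedRing R] {A : Matrix n n R}
    (hA : ∀ i j, 0 ≤ A i j) (i : n) : ∑ j, (1 - A) i j ≤ (1 - A) i i := by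
  simp only [sub_apply, Finset.sum_sub_distrib, one_apply, Finset.sum_ite_eq, Finset.mem_univ,
    if_true]
  exact sub_le_sub_left (Finset.single_le_sum (fun j _ => hA i j) (Finset.mem_univ i)) 1

section SubstochasticInverse

variable {X : Matrix n n ℝ}

/-- Discrete maximum principle: look at a coordinate where `y` is smallest. -/
theorem nonneg_of_nonneg_one_sub_mulVec (hX0 : ∀ i j, 0 ≤ X i j) (hX1 : ∀ i, ∑ j, X i j < 1)
    {y : n → ℝ} (hy : 0 ≤ (1 - X) *ᵥ y) : 0 ≤ y := by
  intro i
  have : Nonempty n := ⟨i⟩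
  obtain ⟨k, hk⟩ := Finite.exists_min y
  suffices 0 ≤ y k from this.trans (hk i)
  have hmean : (∑ j, X k j) * y k ≤ ∑ j, X k j * y j := by
    rw [Finset.sum_mul]
    exact Finset.sum_le_sum fun j _ => mul_le_mul_of_nonneg_left (hk j) (hX0 k j)
  have hyk : 0 ≤ y k - ∑ j, X k j * y j := by
    have := hy k
    rwa [sub_mulVec, one_mulVec] at this
  nlinarith [hX1 k]

theorem isUnit_one_sub_of_sum_lt_one (hX0 : ∀ i j, 0 ≤ X i j) (hX1 : ∀ i, ∑ j, X i j < 1) :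
    IsUnit (1 - X) := by
  rw [← mulVec_injective_iff_isUnit]
  intro y z hyz
  have h : (1 - X) *ᵥ (y - z) = 0 := by rw [mulVec_sub, hyz, sub_self]
  have hyz : 0 ≤ y - z := nonneg_of_nonneg_one_sub_mulVec hX0 hX1 h.ge
  have hzy : 0 ≤ z - y :=
    nonneg_of_nonneg_one_sub_mulVec hX0 hX1 (by rw [← neg_sub y z, mulVec_neg, h, neg_zero])
  exact le_antisymm (sub_nonneg.mp hzy) (sub_nonneg.mp hyz)

theorem mul_inv_one_sub_of_sum_lt_one (hX0 : ∀ i j, 0 ≤ X i j) (hX1 : ∀ i, ∑ j, X i j < 1) :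
    (1 - X) * (1 - X)⁻¹ = 1 :=
  mul_nonsing_inv _ ((isUnit_iff_isUnit_det _).mp (isUnit_one_sub_of_sum_lt_one hX0 hX1))

theorem inv_one_sub_nonneg (hX0 : ∀ i j, 0 ≤ X i j) (hX1 : ∀ i, ∑ j, X i j < 1)
    (i j : n) : 0 ≤ (1 - X)⁻¹ i j := by
  have hcol : (1 - X) *ᵥ (1 - X)⁻¹.col j = Pi.single j 1 := by
    rw [← mulVec_single_one, mulVec_mulVec, mul_inv_one_sub_of_sum_lt_one hX0 hX1, one_mulVec]
  exact nonneg_of_nonneg_one_sub_mulVec hX0 hX1 (hcol ▸ Pi.single_nonneg.mpr zero_le_one) i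

theorem one_le_inv_one_sub_mulVec_one (hX0 : ∀ i j, 0 ≤ X i j) (hX1 : ∀ i, ∑ j, X i j < 1) :
    1 ≤ (1 - X)⁻¹ *ᵥ 1 := by
  rw [← sub_nonneg]
  apply nonneg_of_nonneg_one_sub_mulVec hX0 hX1
  rw [mulVec_sub, mulVec_mulVec, mul_inv_one_sub_of_sum_lt_one hX0 hX1, sub_mulVec, sub_sub_cancel]
  exact fun i => (mulVec_one_apply X i).symm ▸ Finset.sum_nonneg fun j _ => hX0 i j

end SubstochasticInverse

theorem one_sub_smul_inv_one_sub_mul_eq [CommRing R] {P B : Matrix n n R} {γ : R}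
    (h : IsUnit (1 - γ • (P * (1 - B)))) :
    1 - γ • ((1 - γ • (P * (1 - B)))⁻¹ * P * B) = (1 - γ • (P * (1 - B)))⁻¹ * (1 - γ • P) := by
  set N := (1 - γ • (P * (1 - B)))⁻¹
  have hN : N * (1 - γ • (P * (1 - B))) = 1 := nonsing_inv_mul _ ((isUnit_iff_isUnit_det _).mp h)
  calc 1 - γ • (N * P * B) = 1 - N * ((1 - γ • (P * (1 - B))) - (1 - γ • P)) := by
        rw [mul_assoc, ← mul_smul_comm]
        congr 2
        rw [mul_sub, mul_one, smul_sub]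
        abel
    _ = N * (1 - γ • P) := by rw [mul_sub N, hN]; abel

end Matrix

section DiscountedStopping

variable {S : Type*} [Fintype S] [DecidableEq S] {P : Matrix S S ℝ} {β : S → ℝ} {γ : ℝ}

theorem smul_mul_one_sub_diagonal_apply (s t : S) :
    (γ • (P * (1 - diagonal β))) s t = γ * (P s t * (1 - β t)) := by
  rw [← diagonal_one, diagonal_sub, Matrix.smul_apply, mul_diagonal, smul_eq_mul]

theorem smul_mul_one_sub_diagonal_nonneg (hP0 : ∀ s t, 0 ≤ P s t) (hβ1 : ∀ s, β s ≤ 1)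
    (hγ0 : 0 ≤ γ) (s t : S) : 0 ≤ (γ • (P * (1 - diagonal β))) s t := by
  rw [smul_mul_one_sub_diagonal_apply]
  exact mul_nonneg hγ0 (mul_nonneg (hP0 s t) (sub_nonneg.mpr (hβ1 t)))

theorem sum_smul_mul_one_sub_diagonal_lt_one (hP0 : ∀ s t, 0 ≤ P s t)
    (hP1 : ∀ s, ∑ t, P s t = 1) (hβ0 : ∀ s, 0 ≤ β s) (hγ0 : 0 ≤ γ) (hγ1 : γ < 1) (s : S) :
    ∑ t, (γ • (P * (1 - diagonal β))) s t < 1 := by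
  calc ∑ t, (γ • (P * (1 - diagonal β))) s t ≤ ∑ t, γ * P s t := by
        refine Finset.sum_le_sum fun t _ => ?_
        rw [smul_mul_one_sub_diagonal_apply]
        exact mul_le_mul_of_nonneg_left
          (mul_le_of_le_one_right (hP0 s t) (sub_le_self 1 (hβ0 t))) hγ0
    _ = γ := by rw [← Finset.mul_sum, hP1 s, mul_one]
    _ < 1 := hγ1

end DiscountedStopping

theorem stmt_4_general {S : Type*} [Fintype S] [DecidableEq S]
    (P : Matrix S S ℝ) (hP0 : ∀ s s', 0 ≤ P s s') (hP1 : ∀ s, ∑ s', P s s' = 1)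
    (β : S → ℝ) (hβ0 : ∀ s, 0 ≤ β s) (hβ1 : ∀ s, β s ≤ 1)
    (γ : ℝ) (hγ0 : 0 ≤ γ) (hγ1 : γ < 1) :
    let B := diagonal β
    let Pβ := γ • ((1 - γ • (P * (1 - B)))⁻¹ * P * B)
    (∀ s, 1 - γ ≤ (1 - Pβ) s s) ∧ (∀ s, 0 < (1 - Pβ) s s) ∧
      (∀ s, 1 - γ ≤ ∑ s', (1 - Pβ) s s') ∧ (∀ s, 0 < ∑ s', (1 - Pβ) s s') := by
  intro B Pβ
  have hX0 := smul_mul_one_sub_diagonal_nonneg hP0 hβ1 hγ0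
  have hX1 := sum_smul_mul_one_sub_diagonal_lt_one hP0 hP1 hβ0 hγ0 hγ1
  have hN0 := inv_one_sub_nonneg hX0 hX1
  have hPβ0 : ∀ s t, 0 ≤ Pβ s t := fun s t =>
    mul_nonneg hγ0 <| mul_apply_nonneg_s4 (mul_apply_nonneg_s4 hN0 hP0)
      (diagonal_apply_nonneg hβ0) s t
  have hP : P *ᵥ 1 = 1 := funext fun s => (mulVec_one_apply P s).trans (hP1 s)
  have hγP : (1 - γ • P) *ᵥ 1 = (1 - γ) • 1 := by
    rw [sub_mulVec, one_mulVec, smul_mulVec, hP, sub_smul, one_smul]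
  have hrow : ∀ s, 1 - γ ≤ ∑ s', (1 - Pβ) s s' := by
    intro s
    rw [← mulVec_one_apply, one_sub_smul_inv_one_sub_mul_eq (isUnit_one_sub_of_sum_lt_one hX0 hX1),
      ← mulVec_mulVec, hγP, mulVec_smul, Pi.smul_apply, smul_eq_mul]
    exact le_mul_of_one_le_right (sub_nonneg.mpr hγ1.le) (one_le_inv_one_sub_mulVec_one hX0 hX1 s)
  have hdiag : ∀ s, 1 - γ ≤ (1 - Pβ) s s := fun s => (hrow s).trans (sum_one_sub_apply_le hPβ0 s)
  exact ⟨hdiag, fun s => by linarith [hdiag s], hrow, fun s => by linarith [hrow s]⟩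

/-- every diagonal entry of `I − P^β` is at least `1 − γ` (hence positive),
and every row sum of `I − P^β` is at least `1 − γ` (hence positive). -/
theorem stmt_4 {S : Type*} [Fintype S] [Nonempty S] [DecidableEq S]
    (P : Matrix S S ℝ) (hP0 : ∀ s s', 0 ≤ P s s') (hP1 : ∀ s, ∑ s', P s s' = 1)
    (β : S → ℝ) (hβ0 : ∀ s, 0 ≤ β s) (hβ1 : ∀ s, β s ≤ 1)
    (γ : ℝ) (hγ0 : 0 ≤ γ) (hγ1 : γ < 1) :
    let B := diagonal β
    let Pβ := γ • ((1 - γ • (P * (1 - B)))⁻¹ * P * B)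
    (∀ s, 1 - γ ≤ (1 - Pβ) s s) ∧ (∀ s, 0 < (1 - Pβ) s s) ∧
      (∀ s, 1 - γ ≤ ∑ s', (1 - Pβ) s s') ∧ (∀ s, 0 < ∑ s', (1 - Pβ) s s') :=
  stmt_4_general P hP0 hP1 β hβ0 hβ1 γ hγ0 hγ1
end

section
/- Assume additionally that β(s) > 0 for all s ∈ S, and let d : S → ℝ satisfy d(s) > 0 for all s and, as a row vector, d·P = d (d is a stationary distribution of P up to normalization). Then the row vector with entries d(s)·β(s) satisfies (d∘β)·(I − P·(I−B))⁻¹ = d, where d∘β denotes the row vector s ↦ d(s)·β(s). -/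
open Matrix

/-
Since `d P = d`, the row vector `d` satisfies `d (I − P (I − B)) = d − d (I − B) = d ∘ β`, so the
claim is just this identity multiplied by the inverse. The inverse exists because
`P (I − B)` has nonnegative entries and row sums `1 − ∑ⱼ P i j β j < 1`: then `I − P (I − B)`
is strictly diagonally dominant by rows.
-/

namespace Matrix

variable {n K : Type*} [Fintype n] [DecidableEq n]

theorem det_one_sub_ne_zero_of_sum_norm_lt_one [NormedField K] (A : Matrix n n K)
    (h : ∀ i, ∑ j, ‖A i j‖ < 1) : (1 - A).det ≠ 0 := by
  refine det_ne_zero_of_sum_row_lt_diag fun k => ?_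
  calc ∑ j ∈ Finset.univ.erase k, ‖(1 - A) k j‖
      = ∑ j ∈ Finset.univ.erase k, ‖A k j‖ :=
        Finset.sum_congr rfl fun j hj => by
          rw [sub_apply, one_apply_ne (Finset.ne_of_mem_erase hj).symm, zero_sub, norm_neg]
    _ = ∑ j, ‖A k j‖ - ‖A k k‖ := Finset.sum_erase_eq_sub (Finset.mem_univ k)
    _ < 1 - ‖A k k‖ := by linarith [h k]
    _ ≤ ‖(1 - A) k k‖ := by
        rw [sub_apply, one_apply_eq]
        simpa using norm_sub_norm_le (1 : K) (A k k)

theorem vecMul_nonsing_inv_eq_of_vecMul_eq [CommRing K] {M : Matrix n n K} (hM : IsUnit M.det)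
    {v w : n → K} (h : w ᵥ* M = v) : v ᵥ* M⁻¹ = w := by
  rw [← h, vecMul_vecMul, mul_nonsing_inv _ hM, vecMul_one]

theorem vecMul_one_sub_mul_of_vecMul_eq [CommRing K] {d : n → K} {P : Matrix n n K}
    (hdP : d ᵥ* P = d) (M : Matrix n n K) : d ᵥ* (1 - P * M) = d - d ᵥ* M := by
  rw [vecMul_sub, vecMul_one, ← vecMul_vecMul, hdP]

end Matrix

theorem sum_mul_pos_of_sum_eq_one {ι : Type*} [Fintype ι] {p f : ι → ℝ} (hp0 : ∀ i, 0 ≤ p i)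
    (hp1 : ∑ i, p i = 1) (hf : ∀ i, 0 < f i) : 0 < ∑ i, p i * f i := by
  obtain ⟨i, -, hi⟩ := Finset.exists_ne_zero_of_sum_ne_zero (hp1 ▸ one_ne_zero : ∑ i, p i ≠ 0)
  exact Finset.sum_pos' (fun j _ => mul_nonneg (hp0 j) (hf j).le)
    ⟨i, Finset.mem_univ i, mul_pos ((hp0 i).lt_of_ne' hi) (hf i)⟩

theorem det_one_sub_mul_diagonal_ne_zero {S : Type*} [Fintype S] [DecidableEq S]
    {P : Matrix S S ℝ} (hP0 : ∀ s s', 0 ≤ P s s') (hP1 : ∀ s, ∑ s', P s s' = 1)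
    {β : S → ℝ} (hβ1 : ∀ s, β s ≤ 1) (hβpos : ∀ s, 0 < β s) :
    (1 - P * diagonal (1 - β)).det ≠ 0 := by
  refine det_one_sub_ne_zero_of_sum_norm_lt_one _ fun s => ?_
  have hpos := sum_mul_pos_of_sum_eq_one (hP0 s) (hP1 s) hβpos
  calc _ = ∑ s', P s s' * (1 - β s') := by
        refine Finset.sum_congr rfl fun s' _ => ?_
        rw [mul_diagonal, Pi.sub_apply, Pi.one_apply,
          Real.norm_of_nonneg (mul_nonneg (hP0 s s') (sub_nonneg.2 (hβ1 s')))]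
    _ = 1 - ∑ s', P s s' * β s' := by simp only [mul_one_sub, Finset.sum_sub_distrib, hP1]
    _ < 1 := by linarith

theorem stmt_6_general {S : Type*} [Fintype S] [DecidableEq S]
    (P : Matrix S S ℝ) (hP0 : ∀ s s', 0 ≤ P s s') (hP1 : ∀ s, ∑ s', P s s' = 1)
    (β : S → ℝ) (hβ1 : ∀ s, β s ≤ 1)
    (hβpos : ∀ s, 0 < β s)
    (d : S → ℝ) (hdP : Matrix.vecMul d P = d) :
    Matrix.vecMul (fun s => d s * β s) (1 - P * (1 - diagonal β))⁻¹ = d := by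
  have hB : 1 - diagonal β = diagonal (1 - β) := by
    rw [← diagonal_one, diagonal_sub]; rfl
  rw [hB]
  refine vecMul_nonsing_inv_eq_of_vecMul_eq
    (det_one_sub_mul_diagonal_ne_zero hP0 hP1 hβ1 hβpos).isUnit ?_
  funext s
  rw [vecMul_one_sub_mul_of_vecMul_eq hdP, Pi.sub_apply, vecMul_diagonal, Pi.sub_apply,
    Pi.one_apply]
  ring

/-- if `β(s) > 0` for all `s` and `d` is a positive left fixed vector
of `P` (i.e. `d·P = d`), then `(d∘β)·(I − P·(I−B))⁻¹ = d`, where `d∘β` is the row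
vector `s ↦ d(s)·β(s)`. -/
theorem stmt_6 {S : Type*} [Fintype S] [Nonempty S] [DecidableEq S]
    (P : Matrix S S ℝ) (hP0 : ∀ s s', 0 ≤ P s s') (hP1 : ∀ s, ∑ s', P s s' = 1)
    (β : S → ℝ) (hβ0 : ∀ s, 0 ≤ β s) (hβ1 : ∀ s, β s ≤ 1)
    (hβpos : ∀ s, 0 < β s)
    (d : S → ℝ) (hd : ∀ s, 0 < d s) (hdP : Matrix.vecMul d P = d) :
    Matrix.vecMul (fun s => d s * β s) (1 - P * (1 - diagonal β))⁻¹ = d :=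
  stmt_6_general P hP0 hP1 β hβ1 hβpos d hdP
end

section
/- Assume additionally that β(s) > 0 for all s ∈ S, and let d : S → ℝ satisfy d(s) > 0 for all s and, as a row vector, d·P = d. Define P^β₁ = (I − P·(I−B))⁻¹·P·B (the γ = 1 case of P^β). Then (d∘β)·P^β₁ = d∘β, where d∘β denotes the row vector s ↦ d(s)·β(s); that is, d∘β is a left fixed vector of P^β₁, and hence (d∘β)·(I − P^β₁) = 0. -/
open Matrix

/-
Since `d P = d`, the row vector `d` satisfies `d (I − P(I − B)) = d − d(I − B) = d ∘ β`, so
`(d ∘ β)(I − P(I − B))⁻¹ = d` and therefore `(d ∘ β) P^β₁ = d P B = d B = d ∘ β`. Invertibility of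
`I − P(I − B)` follows from Gershgorin: the row sums of the nonnegative matrix `P(I − B)` are
`1 − Σ_{s'} P(s,s') β(s') < 1`, so `I − P(I − B)` is strictly diagonally dominant.
-/

section

variable {S : Type*} [Fintype S] [DecidableEq S]

theorem Matrix.det_one_sub_ne_zero_of_sum_norm_lt_one_s7 {K : Type*} [NormedField K]
    (Q : Matrix S S K) (hQ : ∀ i, ∑ j, ‖Q i j‖ < 1) : (1 - Q).det ≠ 0 := by
  refine det_ne_zero_of_sum_row_lt_diag fun k => ?_
  have h_off : ∑ j ∈ Finset.univ.erase k, ‖(1 - Q) k j‖ = ∑ j ∈ Finset.univ.erase k, ‖Q k j‖ :=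
    Finset.sum_congr rfl fun j hj => by
      rw [sub_apply, one_apply_ne (Finset.ne_of_mem_erase hj).symm, zero_sub, norm_neg]
  have h_diag : 1 - ‖Q k k‖ ≤ ‖(1 - Q) k k‖ := by
    simpa only [sub_apply, one_apply_eq, norm_one] using norm_sub_norm_le (1 : K) (Q k k)
  have h_split := Finset.add_sum_erase Finset.univ (fun j => ‖Q k j‖) (Finset.mem_univ k)
  linarith [hQ k]

theorem sum_abs_mul_one_sub_diagonal_lt_one (P : Matrix S S ℝ) (hP0 : ∀ s s', 0 ≤ P s s')
    (hP1 : ∀ s, ∑ s', P s s' = 1) (β : S → ℝ) (hβ1 : ∀ s, β s ≤ 1) (hβpos : ∀ s, 0 < β s)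
    (s : S) : ∑ s', |(P * (1 - diagonal β)) s s'| < 1 := by
  have h_entry : ∀ s', |(P * (1 - diagonal β)) s s'| = P s s' - P s s' * β s' := fun s' => by
    rw [Matrix.mul_sub, Matrix.mul_one, Matrix.sub_apply, mul_diagonal, ← mul_one_sub,
      abs_of_nonneg (mul_nonneg (hP0 s s') (sub_nonneg.mpr (hβ1 s'))), mul_one_sub]
  obtain ⟨t, -, hPt⟩ := Finset.exists_ne_zero_of_sum_ne_zero (by rw [hP1 s]; exact one_ne_zero)
  have h_pos : 0 < ∑ s', P s s' * β s' :=
    Finset.sum_pos' (fun s' _ => mul_nonneg (hP0 s s') (hβpos s').le)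
      ⟨t, Finset.mem_univ t, mul_pos ((hP0 s t).lt_of_ne' hPt) (hβpos t)⟩
  rw [Finset.sum_congr rfl fun s' _ => h_entry s', Finset.sum_sub_distrib, hP1 s]
  linarith

theorem vecMul_one_sub_mul_one_sub_diagonal {R : Type*} [CommRing R] (P : Matrix S S R)
    (β d : S → R) (hdP : d ᵥ* P = d) :
    d ᵥ* (1 - P * (1 - diagonal β)) = fun s => d s * β s := by
  rw [vecMul_sub, ← vecMul_vecMul, hdP, vecMul_sub, vecMul_one, sub_sub_cancel]
  exact funext (vecMul_diagonal d β)

end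

theorem stmt_7_general {S : Type*} [Fintype S] [DecidableEq S]
    (P : Matrix S S ℝ) (hP0 : ∀ s s', 0 ≤ P s s') (hP1 : ∀ s, ∑ s', P s s' = 1)
    (β : S → ℝ) (hβ1 : ∀ s, β s ≤ 1)
    (hβpos : ∀ s, 0 < β s)
    (d : S → ℝ) (hdP : Matrix.vecMul d P = d) :
    let B := diagonal β
    let Pβ₁ := (1 - P * (1 - B))⁻¹ * P * B
    Matrix.vecMul (fun s => d s * β s) Pβ₁ = (fun s => d s * β s) ∧
      Matrix.vecMul (fun s => d s * β s) (1 - Pβ₁) = 0 := by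
  intro B Pβ₁
  have h_unit : IsUnit (1 - P * (1 - B)).det :=
    (det_one_sub_ne_zero_of_sum_norm_lt_one_s7 _
      (sum_abs_mul_one_sub_diagonal_lt_one P hP0 hP1 β hβ1 hβpos)).isUnit
  have h_inv : (fun s => d s * β s) ᵥ* (1 - P * (1 - B))⁻¹ = d := by
    rw [← vecMul_one_sub_mul_one_sub_diagonal P β d hdP, vecMul_vecMul,
      mul_nonsing_inv _ h_unit, vecMul_one]
  have h_fixed : (fun s => d s * β s) ᵥ* Pβ₁ = fun s => d s * β s := by
    rw [← vecMul_vecMul, ← vecMul_vecMul, h_inv, hdP]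
    exact funext (vecMul_diagonal d β)
  exact ⟨h_fixed, by rw [vecMul_sub, vecMul_one, h_fixed, sub_self]⟩

/-- if `β(s) > 0` for all `s` and `d·P = d` with `d > 0`, then the row
vector `d∘β` is a left fixed vector of `P^β₁ = (I − P·(I−B))⁻¹·P·B`, and hence
`(d∘β)·(I − P^β₁) = 0`. -/
theorem stmt_7 {S : Type*} [Fintype S] [Nonempty S] [DecidableEq S]
    (P : Matrix S S ℝ) (hP0 : ∀ s s', 0 ≤ P s s') (hP1 : ∀ s, ∑ s', P s s' = 1)
    (β : S → ℝ) (hβ0 : ∀ s, 0 ≤ β s) (hβ1 : ∀ s, β s ≤ 1)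
    (hβpos : ∀ s, 0 < β s)
    (d : S → ℝ) (hd : ∀ s, 0 < d s) (hdP : Matrix.vecMul d P = d) :
    let B := diagonal β
    let Pβ₁ := (1 - P * (1 - B))⁻¹ * P * B
    Matrix.vecMul (fun s => d s * β s) Pβ₁ = (fun s => d s * β s) ∧
      Matrix.vecMul (fun s => d s * β s) (1 - Pβ₁) = 0 :=
  stmt_7_general P hP0 hP1 β hβ1 hβpos d hdP
end

section
/- Let 0 ≤ γ < 1, and let d : S → ℝ satisfy d(s) > 0 for all s and, as a row vector, d·P = d. Then entrywise (d∘β)·P^β ≤ γ·(d∘β), where d∘β denotes the row vector s ↦ d(s)·β(s). Consequently, for every s ∈ S the s-th entry of the row vector (d∘β)·(I − P^β) is at least (1−γ)·d(s)·β(s); in particular, if β(s) > 0 for all s, then every column sum of the matrix D·B·(I − P^β) is positive, where D is the diagonal matrix with D(s,s) = d(s). -/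
/-!
Write `K = γ P (I − B)` for the discounted kernel of continuing without stopping, so that
`P^β = γ (I − K)⁻¹ P B`. Since `K` is entrywise nonnegative with row sums at most `γ < 1`,
a minimum principle shows that `(I − K)⁻¹` exists and is entrywise nonnegative. Stationarity
`d P = d` gives `d (I − K) = d (1 − γ (1 − β)) ≥ d∘β`, and multiplying on the right by
`(I − K)⁻¹ ≥ 0` yields `(d∘β)(I − K)⁻¹ ≤ d`. Multiplying further by `γ P B ≥ 0` gives
`(d∘β) P^β ≤ γ d P B = γ (d∘β)`.
-/

open Matrix

section Substochastic

variable {S : Type*} [Fintype S] {A : Matrix S S ℝ} {γ : ℝ}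

theorem nonneg_of_eq_mulVec_add (hA0 : ∀ i j, 0 ≤ A i j) (hA1 : ∀ i, ∑ j, A i j ≤ γ)
    (hγ1 : γ < 1) {a y : S → ℝ} (ha : 0 ≤ a) (hy : y = A *ᵥ y + a) : 0 ≤ y := by
  by_contra hneg
  obtain ⟨j, hj⟩ : ∃ j, y j < 0 := by simpa [Pi.le_def] using hneg
  obtain ⟨i, -, hmin⟩ := Finset.exists_min_image Finset.univ y ⟨j, Finset.mem_univ j⟩
  have hyi : y i < 0 := (hmin j (Finset.mem_univ j)).trans_lt hj
  have hAy : (∑ k, A i k) * y i ≤ (A *ᵥ y) i := by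
    rw [Finset.sum_mul]
    exact Finset.sum_le_sum fun k _ =>
      mul_le_mul_of_nonneg_left (hmin k (Finset.mem_univ k)) (hA0 i k)
  have hγy : γ * y i ≤ (∑ k, A i k) * y i := mul_le_mul_of_nonpos_right (hA1 i) hyi.le
  have hyi_eq : y i = (A *ᵥ y) i + a i := congrFun hy i
  have hai : 0 ≤ a i := ha i
  nlinarith [mul_pos (sub_pos.mpr hγ1) (neg_pos.mpr hyi)]

theorem isUnit_one_sub_of_sum_le [DecidableEq S] (hA0 : ∀ i j, 0 ≤ A i j)
    (hA1 : ∀ i, ∑ j, A i j ≤ γ) (hγ1 : γ < 1) : IsUnit (1 - A) := by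
  rw [← mulVec_injective_iff_isUnit]
  intro u v huv
  have hfix : ∀ x : S → ℝ, (1 - A) *ᵥ x = 0 → x = A *ᵥ x + 0 := fun x hx => by
    rw [sub_mulVec, one_mulVec, sub_eq_zero] at hx
    rw [add_zero, ← hx]
  have hker : (1 - A) *ᵥ (u - v) = 0 := by rw [mulVec_sub, huv, sub_self]
  have hle : 0 ≤ u - v := nonneg_of_eq_mulVec_add hA0 hA1 hγ1 le_rfl (hfix _ hker)
  have hge : 0 ≤ -(u - v) :=
    nonneg_of_eq_mulVec_add hA0 hA1 hγ1 le_rfl (hfix _ (by rw [mulVec_neg, hker, neg_zero]))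
  exact sub_eq_zero.mp (le_antisymm (neg_nonneg.mp hge) hle)

theorem inv_one_sub_nonneg [DecidableEq S] (hA0 : ∀ i j, 0 ≤ A i j)
    (hA1 : ∀ i, ∑ j, A i j ≤ γ) (hγ1 : γ < 1) (i j : S) : 0 ≤ (1 - A)⁻¹ i j := by
  set N := (1 - A)⁻¹
  have hN : N = A * N + 1 := by
    have := mul_nonsing_inv (1 - A)
      ((isUnit_iff_isUnit_det _).mp (isUnit_one_sub_of_sum_le hA0 hA1 hγ1))
    rw [sub_mul, one_mul, sub_eq_iff_eq_add] at this
    exact this.trans (add_comm _ _)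
  have hcol : (fun k => N k j) = A *ᵥ (fun k => N k j) + fun k => (1 : Matrix S S ℝ) k j :=
    funext fun k => congrFun (congrFun hN k) j
  exact nonneg_of_eq_mulVec_add hA0 hA1 hγ1 (fun k => zero_le_one_elem k j) hcol i

end Substochastic

theorem vecMul_le_vecMul_of_nonneg {S : Type*} [Fintype S] {M : Matrix S S ℝ}
    (hM : ∀ i j, 0 ≤ M i j) {v w : S → ℝ} (hvw : v ≤ w) : v ᵥ* M ≤ w ᵥ* M := fun j =>
  Finset.sum_le_sum fun i _ => mul_le_mul_of_nonneg_right (hvw i) (hM i j)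

theorem sum_diagonal_mul_apply {S : Type*} [Fintype S] [DecidableEq S] (v : S → ℝ)
    (M : Matrix S S ℝ) (j : S) : ∑ i, (diagonal v * M) i j = (v ᵥ* M) j := by
  simp only [diagonal_mul, vecMul, dotProduct]

section Stopping

variable {S : Type*} [Fintype S] [DecidableEq S] {P : Matrix S S ℝ} {β : S → ℝ} {γ : ℝ}

noncomputable def continueKernel (P : Matrix S S ℝ) (β : S → ℝ) (γ : ℝ) : Matrix S S ℝ :=
  γ • (P * (1 - diagonal β))

noncomputable def stoppedKernel (P : Matrix S S ℝ) (β : S → ℝ) (γ : ℝ) : Matrix S S ℝ :=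
  γ • ((1 - continueKernel P β γ)⁻¹ * P * diagonal β)

theorem continueKernel_apply (i j : S) :
    continueKernel P β γ i j = γ * (P i j * (1 - β j)) := by
  simp only [continueKernel, Matrix.smul_apply, mul_sub, mul_one, Matrix.sub_apply,
    mul_diagonal, smul_eq_mul]

theorem continueKernel_nonneg (hP0 : ∀ s s', 0 ≤ P s s') (hβ1 : ∀ s, β s ≤ 1)
    (hγ0 : 0 ≤ γ) (i j : S) : 0 ≤ continueKernel P β γ i j := by
  rw [continueKernel_apply]
  exact mul_nonneg hγ0 (mul_nonneg (hP0 i j) (sub_nonneg.mpr (hβ1 j)))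

theorem sum_continueKernel_le (hP0 : ∀ s s', 0 ≤ P s s') (hP1 : ∀ s, ∑ s', P s s' = 1)
    (hβ0 : ∀ s, 0 ≤ β s) (hγ0 : 0 ≤ γ) (i : S) : ∑ j, continueKernel P β γ i j ≤ γ := by
  simp_rw [continueKernel_apply, ← Finset.mul_sum]
  refine mul_le_of_le_one_right hγ0 ((Finset.sum_le_sum fun j _ => ?_).trans (hP1 i).le)
  nlinarith [hP0 i j, hβ0 j]

theorem vecMul_continueKernel {d : S → ℝ} (hdP : d ᵥ* P = d) :
    d ᵥ* continueKernel P β γ = fun s => γ * (1 - β s) * d s := by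
  rw [continueKernel, vecMul_smul, ← vecMul_vecMul, hdP, vecMul_sub, vecMul_one]
  ext s
  simp only [Pi.smul_apply, Pi.sub_apply, vecMul_diagonal, smul_eq_mul]
  ring

theorem vecMul_inv_one_sub_continueKernel_le (hP0 : ∀ s s', 0 ≤ P s s')
    (hP1 : ∀ s, ∑ s', P s s' = 1) (hβ0 : ∀ s, 0 ≤ β s) (hβ1 : ∀ s, β s ≤ 1)
    (hγ0 : 0 ≤ γ) (hγ1 : γ < 1) {d : S → ℝ} (hd : 0 ≤ d) (hdP : d ᵥ* P = d) :
    (fun s => d s * β s) ᵥ* (1 - continueKernel P β γ)⁻¹ ≤ d := by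
  set K := continueKernel P β γ
  have hK0 := continueKernel_nonneg hP0 hβ1 hγ0
  have hK1 := sum_continueKernel_le hP0 hP1 hβ0 hγ0
  have hunit := (isUnit_iff_isUnit_det _).mp (isUnit_one_sub_of_sum_le hK0 hK1 hγ1)
  have hle : (fun s => d s * β s) ≤ d ᵥ* (1 - K) := fun s => by
    have hds : 0 ≤ d s := hd s
    rw [vecMul_sub, vecMul_one, vecMul_continueKernel hdP, Pi.sub_apply]
    dsimp only
    linarith [mul_nonneg (mul_nonneg (sub_nonneg.mpr (hβ1 s)) (sub_nonneg.mpr hγ1.le)) hds]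
  calc (fun s => d s * β s) ᵥ* (1 - K)⁻¹
      ≤ (d ᵥ* (1 - K)) ᵥ* (1 - K)⁻¹ :=
        vecMul_le_vecMul_of_nonneg (inv_one_sub_nonneg hK0 hK1 hγ1) hle
    _ = d := by rw [vecMul_vecMul, mul_nonsing_inv _ hunit, vecMul_one]

theorem vecMul_stoppedKernel_le (hP0 : ∀ s s', 0 ≤ P s s')
    (hP1 : ∀ s, ∑ s', P s s' = 1) (hβ0 : ∀ s, 0 ≤ β s) (hβ1 : ∀ s, β s ≤ 1)
    (hγ0 : 0 ≤ γ) (hγ1 : γ < 1) {d : S → ℝ} (hd : 0 ≤ d) (hdP : d ᵥ* P = d) :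
    (fun s => d s * β s) ᵥ* stoppedKernel P β γ ≤ γ • fun s => d s * β s := by
  have hPB : ∀ i j, 0 ≤ (P * diagonal β) i j := fun i j => by
    rw [mul_diagonal]
    exact mul_nonneg (hP0 i j) (hβ0 j)
  have hdPB : d ᵥ* (P * diagonal β) = fun s => d s * β s := by
    rw [← vecMul_vecMul, hdP]
    exact funext fun s => vecMul_diagonal d β s
  rw [stoppedKernel, vecMul_smul, Matrix.mul_assoc, ← vecMul_vecMul]
  refine smul_le_smul_of_nonneg_left ?_ hγ0
  calc _ ≤ d ᵥ* (P * diagonal β) := vecMul_le_vecMul_of_nonneg hPB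
        (vecMul_inv_one_sub_continueKernel_le hP0 hP1 hβ0 hβ1 hγ0 hγ1 hd hdP)
    _ = _ := hdPB

end Stopping

theorem stmt_8_general {S : Type*} [Fintype S] [DecidableEq S]
    (P : Matrix S S ℝ) (hP0 : ∀ s s', 0 ≤ P s s') (hP1 : ∀ s, ∑ s', P s s' = 1)
    (β : S → ℝ) (hβ0 : ∀ s, 0 ≤ β s) (hβ1 : ∀ s, β s ≤ 1)
    (γ : ℝ) (hγ0 : 0 ≤ γ) (hγ1 : γ < 1)
    (d : S → ℝ) (hd : ∀ s, 0 < d s) (hdP : Matrix.vecMul d P = d) :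
    let B := diagonal β
    let Pβ := γ • ((1 - γ • (P * (1 - B)))⁻¹ * P * B)
    (∀ s, Matrix.vecMul (fun s' => d s' * β s') Pβ s ≤ γ * (d s * β s)) ∧
    (∀ s, (1 - γ) * (d s * β s) ≤ Matrix.vecMul (fun s' => d s' * β s') (1 - Pβ) s) ∧
    ((∀ s, 0 < β s) → ∀ s, 0 < ∑ s', (diagonal d * B * (1 - Pβ)) s' s) := by
  intro B Pβ
  have hcontract : ∀ s, ((fun s' => d s' * β s') ᵥ* Pβ) s ≤ γ * (d s * β s) :=
    vecMul_stoppedKernel_le hP0 hP1 hβ0 hβ1 hγ0 hγ1 (fun s => (hd s).le) hdP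
  have hgap : ∀ s, (1 - γ) * (d s * β s) ≤ ((fun s' => d s' * β s') ᵥ* (1 - Pβ)) s :=
    fun s => by
      rw [vecMul_sub, vecMul_one, Pi.sub_apply]
      linarith [hcontract s]
  refine ⟨hcontract, hgap, fun hβpos s => ?_⟩
  rw [diagonal_mul_diagonal, sum_diagonal_mul_apply]
  exact (mul_pos (sub_pos.mpr hγ1) (mul_pos (hd s) (hβpos s))).trans_le (hgap s)

/-- entrywise `(d∘β)·P^β ≤ γ·(d∘β)`; consequently each entry of
`(d∘β)·(I − P^β)` is at least `(1−γ)·d(s)·β(s)`, and if `β > 0` everywhere then every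
column sum of `D·B·(I − P^β)` is positive. -/
theorem stmt_8 {S : Type*} [Fintype S] [Nonempty S] [DecidableEq S]
    (P : Matrix S S ℝ) (hP0 : ∀ s s', 0 ≤ P s s') (hP1 : ∀ s, ∑ s', P s s' = 1)
    (β : S → ℝ) (hβ0 : ∀ s, 0 ≤ β s) (hβ1 : ∀ s, β s ≤ 1)
    (γ : ℝ) (hγ0 : 0 ≤ γ) (hγ1 : γ < 1)
    (d : S → ℝ) (hd : ∀ s, 0 < d s) (hdP : Matrix.vecMul d P = d) :
    let B := diagonal β
    let Pβ := γ • ((1 - γ • (P * (1 - B)))⁻¹ * P * B)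
    (∀ s, Matrix.vecMul (fun s' => d s' * β s') Pβ s ≤ γ * (d s * β s)) ∧
    (∀ s, (1 - γ) * (d s * β s) ≤ Matrix.vecMul (fun s' => d s' * β s') (1 - Pβ) s) ∧
    ((∀ s, 0 < β s) → ∀ s, 0 < ∑ s', (diagonal d * B * (1 - Pβ)) s' s) :=
  stmt_8_general P hP0 hP1 β hβ0 hβ1 γ hγ0 hγ1 d hd hdP
end

section
/- Let 0 ≤ γ < 1, assume β(s) > 0 for all s ∈ S, and let d : S → ℝ satisfy d(s) > 0 for all s and, as a row vector, d·P = d. Let D be the diagonal matrix with D(s,s) = d(s). Then the matrix M = D·B·(I − P^β) satisfies xᵀ·M·x > 0 for every nonzero x ∈ ℝ^S; equivalently, the symmetric matrix M + Mᵀ is positive definite. -/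
/-!
Write `N = γ P (I - B)`: it is nonnegative with row sums at most `γ < 1`, so `(I - N)⁻¹ = ∑ Nᵏ`
is entrywise nonnegative and so is `P^β = γ (I - N)⁻¹ P B`. From `P 1 = 1` one gets
`P^β 1 = 1 - (1 - γ) (I - N)⁻¹ 1 ≤ γ 1`, and from `d P = d` one gets
`(d B) P^β = d B - (1 - γ) d (I - N)⁻¹ P B ≤ d B`. So `M = diag(d β) (I - P^β)` where `P^β` has
row sums at most `γ` and `dβ`-weighted column sums at most `dβ`; bounding
`2 xᵢ xⱼ ≤ xᵢ² + xⱼ²` in `xᵀ diag(dβ) P^β x` then gives `xᵀ M x ≥ (1 - γ)/2 ∑ dᵢ βᵢ xᵢ² > 0`.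
-/

open Matrix

section NonnegInverse

attribute [local instance] Matrix.linftyOpNormedRing Matrix.linftyOpNormedAlgebra

variable {n : Type*} [Fintype n] [DecidableEq n] {N : Matrix n n ℝ}

lemma Matrix.linfty_opNorm_lt_one (hN : ∀ i j, 0 ≤ N i j) (hrow : ∀ i, ∑ j, N i j < 1) :
    ‖N‖ < 1 := by
  rw [linfty_opNorm_def, ← NNReal.coe_one, NNReal.coe_lt_coe,
    Finset.sup_lt_iff zero_lt_one]
  intro i _
  rw [← NNReal.coe_lt_coe, NNReal.coe_sum, NNReal.coe_one]
  simpa only [coe_nnnorm, Real.norm_of_nonneg (hN i _)] using hrow i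

lemma Matrix.isUnit_det_one_sub_s9 (hN : ∀ i j, 0 ≤ N i j) (hrow : ∀ i, ∑ j, N i j < 1) :
    IsUnit (1 - N).det :=
  (isUnit_iff_isUnit_det _).mp (isUnit_one_sub_of_norm_lt_one (linfty_opNorm_lt_one hN hrow))

lemma Matrix.inv_one_sub_apply_nonneg_s9 (hN : ∀ i j, 0 ≤ N i j) (hrow : ∀ i, ∑ j, N i j < 1)
    (i j : n) : 0 ≤ (1 - N)⁻¹ i j := by
  have hsum := (hasSum_geom_series_inverse N (linfty_opNorm_lt_one hN hrow)).map
    (entryLinearMap ℝ ℝ i j) (LinearMap.continuous_of_finiteDimensional _)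
  rw [nonsing_inv_eq_ringInverse]
  exact hsum.nonneg fun k => pow_apply_nonneg hN k i j

lemma Matrix.one_le_inv_one_sub_mulVec_one_s9 (hN : ∀ i j, 0 ≤ N i j)
    (hrow : ∀ i, ∑ j, N i j < 1) (i : n) : 1 ≤ ((1 - N)⁻¹ *ᵥ 1) i := by
  have hR : (1 - N)⁻¹ = 1 + (1 - N)⁻¹ * N := by
    have h := nonsing_inv_mul _ (isUnit_det_one_sub_s9 hN hrow)
    rw [mul_sub, mul_one] at h
    exact eq_add_of_sub_eq h
  rw [hR, add_mulVec, one_mulVec, Pi.add_apply, Pi.one_apply, le_add_iff_nonneg_right]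
  exact Finset.sum_nonneg fun j _ => mul_nonneg (Finset.sum_nonneg fun k _ =>
    mul_nonneg (inv_one_sub_apply_nonneg_s9 hN hrow i k) (hN k j)) zero_le_one

end NonnegInverse

section QuadraticForm

variable {n : Type*} [Fintype n]

lemma Matrix.two_mul_dotProduct_mulVec_le {A : Matrix n n ℝ} (hA : ∀ i j, 0 ≤ A i j)
    (x : n → ℝ) :
    2 * (x ⬝ᵥ A *ᵥ x) ≤ ∑ i, (∑ j, A i j) * x i ^ 2 + ∑ j, (∑ i, A i j) * x j ^ 2 := by
  have hterm : ∀ i j, 2 * (x i * (A i j * x j)) ≤ A i j * x i ^ 2 + A i j * x j ^ 2 :=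
    fun i j => by nlinarith [mul_nonneg (hA i j) (sq_nonneg (x i - x j))]
  calc 2 * (x ⬝ᵥ A *ᵥ x) = ∑ i, ∑ j, 2 * (x i * (A i j * x j)) := by
        simp only [dotProduct, mulVec, Finset.mul_sum]
    _ ≤ ∑ i, ∑ j, (A i j * x i ^ 2 + A i j * x j ^ 2) :=
        Finset.sum_le_sum fun i _ => Finset.sum_le_sum fun j _ => hterm i j
    _ = ∑ i, (∑ j, A i j) * x i ^ 2 + ∑ j, (∑ i, A i j) * x j ^ 2 := by
        simp only [Finset.sum_add_distrib, Finset.sum_mul]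
        rw [Finset.sum_comm (f := fun i j => A i j * x j ^ 2)]

lemma Matrix.posDef_add_transpose_of_dotProduct_mulVec_pos {M : Matrix n n ℝ}
    (hM : ∀ x, x ≠ 0 → 0 < x ⬝ᵥ M *ᵥ x) : (M + Mᵀ).PosDef := by
  refine .of_dotProduct_mulVec_pos (isHermitian_add_transpose_self M) fun x hx => ?_
  rw [star_trivial, add_mulVec, dotProduct_add, mulVec_transpose, dotProduct_comm x (x ᵥ* M),
    ← dotProduct_mulVec]
  linarith [hM x hx]

variable [DecidableEq n]

lemma Matrix.dotProduct_diagonal_mul_one_sub_mulVec_pos {w : n → ℝ} {Q : Matrix n n ℝ} {γ : ℝ}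
    (hw : ∀ i, 0 < w i) (hQ : ∀ i j, 0 ≤ Q i j) (hγ : γ < 1)
    (hrow : ∀ i, ∑ j, Q i j ≤ γ) (hcol : ∀ j, ∑ i, w i * Q i j ≤ w j)
    {x : n → ℝ} (hx : x ≠ 0) : 0 < x ⬝ᵥ (diagonal w * (1 - Q)) *ᵥ x := by
  set W := ∑ i, w i * x i ^ 2
  have hW : 0 < W := by
    obtain ⟨i, hi⟩ := Function.ne_iff.mp hx
    exact Finset.sum_pos' (fun j _ => mul_nonneg (hw j).le (sq_nonneg _))
      ⟨i, Finset.mem_univ i, mul_pos (hw i) (pow_two_pos_of_ne_zero hi)⟩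
  have hdiag : x ⬝ᵥ diagonal w *ᵥ x = W := by
    simp only [dotProduct, mulVec_diagonal]
    exact Finset.sum_congr rfl fun i _ => by ring
  have hrowW : ∑ i, (∑ j, w i * Q i j) * x i ^ 2 ≤ γ * W := by
    rw [Finset.mul_sum]
    refine Finset.sum_le_sum fun i _ => ?_
    rw [← Finset.mul_sum]
    nlinarith [mul_le_mul_of_nonneg_left (hrow i) (hw i).le, sq_nonneg (x i)]
  have hcolW : ∑ j, (∑ i, w i * Q i j) * x j ^ 2 ≤ W :=
    Finset.sum_le_sum fun j _ => mul_le_mul_of_nonneg_right (hcol j) (sq_nonneg _)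
  have hwQ := two_mul_dotProduct_mulVec_le (A := diagonal w * Q)
    (fun i j => by rw [diagonal_mul]; exact mul_nonneg (hw i).le (hQ i j)) x
  simp only [diagonal_mul] at hwQ
  rw [mul_sub, mul_one, sub_mulVec, dotProduct_sub, hdiag]
  nlinarith

end QuadraticForm

section StoppedTransition

variable {S : Type*} [Fintype S] [DecidableEq S]

noncomputable def continuationMatrix (P : Matrix S S ℝ) (β : S → ℝ) (γ : ℝ) : Matrix S S ℝ :=
  γ • (P * (1 - diagonal β))

/-- The paper's `P^β`. -/
noncomputable def stoppedTransition (P : Matrix S S ℝ) (β : S → ℝ) (γ : ℝ) : Matrix S S ℝ :=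
  γ • ((1 - continuationMatrix P β γ)⁻¹ * P * diagonal β)

variable {P : Matrix S S ℝ} {β d : S → ℝ} {γ : ℝ}

lemma continuationMatrix_eq :
    continuationMatrix P β γ = γ • (P * diagonal (1 - β)) := by
  rw [continuationMatrix, ← diagonal_one, diagonal_sub]
  rfl

lemma continuationMatrix_apply (i j : S) :
    continuationMatrix P β γ i j = γ * (P i j * (1 - β j)) := by
  rw [continuationMatrix_eq, Matrix.smul_apply, mul_diagonal, smul_eq_mul, Pi.sub_apply,
    Pi.one_apply]

lemma continuationMatrix_apply_nonneg (hP : P ∈ rowStochastic ℝ S) (hβ1 : ∀ s, β s ≤ 1)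
    (hγ0 : 0 ≤ γ) (i j : S) : 0 ≤ continuationMatrix P β γ i j := by
  rw [continuationMatrix_apply]
  exact mul_nonneg hγ0 (mul_nonneg (hP.1 i j) (sub_nonneg.mpr (hβ1 j)))

lemma sum_continuationMatrix_apply_lt_one (hP : P ∈ rowStochastic ℝ S) (hβ0 : ∀ s, 0 ≤ β s)
    (hγ0 : 0 ≤ γ) (hγ1 : γ < 1) (i : S) : ∑ j, continuationMatrix P β γ i j < 1 :=
  calc ∑ j, continuationMatrix P β γ i j = γ * ∑ j, P i j * (1 - β j) := by
        simp only [continuationMatrix_apply, Finset.mul_sum]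
    _ ≤ γ * ∑ j, P i j := by
        gcongr with j
        exact mul_le_of_le_one_right (hP.1 i j) (sub_le_self _ (hβ0 j))
    _ = γ := by rw [sum_row_of_mem_rowStochastic hP, mul_one]
    _ < 1 := hγ1

lemma isUnit_det_one_sub_continuationMatrix (hP : P ∈ rowStochastic ℝ S)
    (hβ0 : ∀ s, 0 ≤ β s) (hβ1 : ∀ s, β s ≤ 1) (hγ0 : 0 ≤ γ) (hγ1 : γ < 1) :
    IsUnit (1 - continuationMatrix P β γ).det :=
  isUnit_det_one_sub_s9 (continuationMatrix_apply_nonneg hP hβ1 hγ0)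
    (sum_continuationMatrix_apply_lt_one hP hβ0 hγ0 hγ1)

lemma one_sub_continuationMatrix_mulVec_one (hP : P *ᵥ 1 = 1) :
    (1 - continuationMatrix P β γ) *ᵥ 1 = (1 - γ) • 1 + γ • P *ᵥ β := by
  have h : diagonal (1 - β) *ᵥ 1 = 1 - β := by ext i; simp [mulVec_diagonal]
  rw [sub_mulVec, one_mulVec, continuationMatrix_eq, smul_mulVec, ← mulVec_mulVec, h,
    mulVec_sub, hP, sub_smul, one_smul, smul_sub]
  abel

lemma vecMul_one_sub_continuationMatrix (hdP : d ᵥ* P = d) :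
    d ᵥ* (1 - continuationMatrix P β γ) = (1 - γ) • d + γ • (d * β) := by
  have h : d ᵥ* diagonal (1 - β) = d - d * β := by ext i; simp [vecMul_diagonal, mul_sub]
  rw [vecMul_sub, vecMul_one, continuationMatrix_eq, vecMul_smul, ← vecMul_vecMul, hdP, h,
    sub_smul, one_smul, smul_sub]
  abel

lemma stoppedTransition_mulVec_one (hP : P *ᵥ 1 = 1)
    (hN : IsUnit (1 - continuationMatrix P β γ).det) :
    stoppedTransition P β γ *ᵥ 1 = 1 - (1 - γ) • ((1 - continuationMatrix P β γ)⁻¹ *ᵥ 1) := by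
  have hγPβ : γ • P *ᵥ β = (1 - continuationMatrix P β γ) *ᵥ 1 - (1 - γ) • 1 := by
    rw [one_sub_continuationMatrix_mulVec_one hP, add_sub_cancel_left]
  have h : diagonal β *ᵥ 1 = β := by ext i; simp [mulVec_diagonal]
  rw [stoppedTransition, smul_mulVec, ← mulVec_mulVec, ← mulVec_mulVec, h, ← mulVec_smul, hγPβ,
    mulVec_sub, mulVec_mulVec, nonsing_inv_mul _ hN, one_mulVec, mulVec_smul]

lemma vecMul_stoppedTransition (hdP : d ᵥ* P = d)
    (hN : IsUnit (1 - continuationMatrix P β γ).det) :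
    (d * β) ᵥ* stoppedTransition P β γ =
      d * β - (1 - γ) • ((d ᵥ* (1 - continuationMatrix P β γ)⁻¹) ᵥ* (P * diagonal β)) := by
  have hγdβ : γ • (d * β) = d ᵥ* (1 - continuationMatrix P β γ) - (1 - γ) • d := by
    rw [vecMul_one_sub_continuationMatrix hdP, add_sub_cancel_left]
  have h : d ᵥ* (P * diagonal β) = d * β := by
    rw [← vecMul_vecMul, hdP]; ext i; simp [vecMul_diagonal]
  rw [stoppedTransition, vecMul_smul, mul_assoc, ← vecMul_vecMul, ← smul_vecMul, ← smul_vecMul,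
    hγdβ, sub_vecMul, vecMul_vecMul, mul_nonsing_inv _ hN, vecMul_one, sub_vecMul, h,
    smul_vecMul, smul_vecMul]

lemma stoppedTransition_apply_nonneg (hP : P ∈ rowStochastic ℝ S)
    (hβ0 : ∀ s, 0 ≤ β s) (hβ1 : ∀ s, β s ≤ 1) (hγ0 : 0 ≤ γ) (hγ1 : γ < 1) (i j : S) :
    0 ≤ stoppedTransition P β γ i j := by
  have hR := inv_one_sub_apply_nonneg_s9 (continuationMatrix_apply_nonneg hP hβ1 hγ0)
    (sum_continuationMatrix_apply_lt_one hP hβ0 hγ0 hγ1)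
  rw [stoppedTransition, Matrix.smul_apply, mul_diagonal, mul_apply, smul_eq_mul]
  exact mul_nonneg hγ0 (mul_nonneg
    (Finset.sum_nonneg fun k _ => mul_nonneg (hR i k) (hP.1 k j)) (hβ0 j))

lemma sum_stoppedTransition_apply_le (hP : P ∈ rowStochastic ℝ S)
    (hβ0 : ∀ s, 0 ≤ β s) (hβ1 : ∀ s, β s ≤ 1) (hγ0 : 0 ≤ γ) (hγ1 : γ < 1) (i : S) :
    ∑ j, stoppedTransition P β γ i j ≤ γ := by
  have hrow := congrFun (stoppedTransition_mulVec_one hP.2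
    (isUnit_det_one_sub_continuationMatrix hP hβ0 hβ1 hγ0 hγ1)) i
  have hr := one_le_inv_one_sub_mulVec_one_s9 (continuationMatrix_apply_nonneg hP hβ1 hγ0)
    (sum_continuationMatrix_apply_lt_one hP hβ0 hγ0 hγ1) i
  simp only [mulVec, dotProduct, Pi.one_apply, mul_one, Pi.sub_apply, Pi.smul_apply,
    smul_eq_mul] at hrow hr
  nlinarith

lemma sum_mul_stoppedTransition_apply_le (hP : P ∈ rowStochastic ℝ S)
    (hβ0 : ∀ s, 0 ≤ β s) (hβ1 : ∀ s, β s ≤ 1) (hγ0 : 0 ≤ γ) (hγ1 : γ < 1)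
    (hd : ∀ s, 0 ≤ d s) (hdP : d ᵥ* P = d) (j : S) :
    ∑ i, d i * β i * stoppedTransition P β γ i j ≤ d j * β j := by
  have hcol := congrFun (vecMul_stoppedTransition hdP
    (isUnit_det_one_sub_continuationMatrix hP hβ0 hβ1 hγ0 hγ1)) j
  have hR := inv_one_sub_apply_nonneg_s9 (continuationMatrix_apply_nonneg hP hβ1 hγ0)
    (sum_continuationMatrix_apply_lt_one hP hβ0 hγ0 hγ1)
  have hpos : 0 ≤ ((d ᵥ* (1 - continuationMatrix P β γ)⁻¹) ᵥ* (P * diagonal β)) j := by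
    simp only [vecMul, dotProduct, mul_diagonal]
    exact Finset.sum_nonneg fun i _ => mul_nonneg
      (Finset.sum_nonneg fun k _ => mul_nonneg (hd k) (hR k i))
      (mul_nonneg (hP.1 i j) (hβ0 j))
  have hsum : ((d * β) ᵥ* stoppedTransition P β γ) j =
      ∑ i, d i * β i * stoppedTransition P β γ i j := rfl
  rw [hsum, Pi.sub_apply, Pi.smul_apply, smul_eq_mul, Pi.mul_apply] at hcol
  nlinarith

end StoppedTransition

theorem stmt_9_general {S : Type*} [Fintype S] [DecidableEq S]
    (P : Matrix S S ℝ) (hP0 : ∀ s s', 0 ≤ P s s') (hP1 : ∀ s, ∑ s', P s s' = 1)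
    (β : S → ℝ) (hβ0 : ∀ s, 0 ≤ β s) (hβ1 : ∀ s, β s ≤ 1)
    (γ : ℝ) (hγ0 : 0 ≤ γ) (hγ1 : γ < 1) (hβpos : ∀ s, 0 < β s)
    (d : S → ℝ) (hd : ∀ s, 0 < d s) (hdP : Matrix.vecMul d P = d) :
    let B := diagonal β
    let Pβ := γ • ((1 - γ • (P * (1 - B)))⁻¹ * P * B)
    let M := diagonal d * B * (1 - Pβ)
    (∀ x : S → ℝ, x ≠ 0 → 0 < x ⬝ᵥ M.mulVec x) ∧ (M + Mᵀ).PosDef := by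
  intro B Pβ M
  have hP : P ∈ rowStochastic ℝ S := mem_rowStochastic_iff_sum.mpr ⟨hP0, hP1⟩
  have hM : M = diagonal (d * β) * (1 - stoppedTransition P β γ) := by
    simp only [M, B, diagonal_mul_diagonal]
    rfl
  have hquad : ∀ x : S → ℝ, x ≠ 0 → 0 < x ⬝ᵥ M *ᵥ x := fun x hx => by
    rw [hM]
    exact dotProduct_diagonal_mul_one_sub_mulVec_pos (fun s => mul_pos (hd s) (hβpos s))
      (stoppedTransition_apply_nonneg hP hβ0 hβ1 hγ0 hγ1) hγ1
      (sum_stoppedTransition_apply_le hP hβ0 hβ1 hγ0 hγ1)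
      (sum_mul_stoppedTransition_apply_le hP hβ0 hβ1 hγ0 hγ1 (fun s => (hd s).le) hdP) hx
  exact ⟨hquad, posDef_add_transpose_of_dotProduct_mulVec_pos hquad⟩

/-- with `β > 0` everywhere and `d` a positive left fixed vector of `P`,
the matrix `M = D·B·(I − P^β)` satisfies `xᵀ·M·x > 0` for every nonzero `x`;
equivalently, `M + Mᵀ` is positive definite. -/
theorem stmt_9 {S : Type*} [Fintype S] [Nonempty S] [DecidableEq S]
    (P : Matrix S S ℝ) (hP0 : ∀ s s', 0 ≤ P s s') (hP1 : ∀ s, ∑ s', P s s' = 1)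
    (β : S → ℝ) (hβ0 : ∀ s, 0 ≤ β s) (hβ1 : ∀ s, β s ≤ 1)
    (γ : ℝ) (hγ0 : 0 ≤ γ) (hγ1 : γ < 1) (hβpos : ∀ s, 0 < β s)
    (d : S → ℝ) (hd : ∀ s, 0 < d s) (hdP : Matrix.vecMul d P = d) :
    let B := diagonal β
    let Pβ := γ • ((1 - γ • (P * (1 - B)))⁻¹ * P * B)
    let M := diagonal d * B * (1 - Pβ)
    (∀ x : S → ℝ, x ≠ 0 → 0 < x ⬝ᵥ M.mulVec x) ∧ (M + Mᵀ).PosDef :=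
  stmt_9_general P hP0 hP1 β hβ0 hβ1 γ hγ0 hγ1 hβpos d hd hdP
end

section
/- Let 0 ≤ γ < 1, let d : S → ℝ be arbitrary with D the diagonal matrix D(s,s) = d(s), let Φ : Matrix S (Fin k) ℝ, and let r ∈ ℝ^S. Define A = Φᵀ·D·B·(I − P^β)·Φ, b = Φᵀ·D·B·(I − γ·P·(I−B))⁻¹·r, and the operator T^β v = B·(I − γ·P·(I−B))⁻¹·(r + γ·P·B·v) + (I−B)·v for v ∈ ℝ^S. Then for every w ∈ ℝ^k, b − A·w = Φᵀ·D·(T^β(Φ·w) − Φ·w). (Forward–backward equivalence in expectation.) -/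
open Matrix

section ForwardBackward

variable {ι R : Type*} [Fintype ι] [DecidableEq ι] [CommRing R]

/-- `M` plays the role of `(I − γ·P·(I−B))⁻¹`, but the identity holds for every matrix `M`. -/
theorem forwardBackward_sub_self_eq (B M P : Matrix ι ι R) (γ : R) (r v : ι → R) :
    B *ᵥ (M *ᵥ (r + γ • (P * B) *ᵥ v)) + (1 - B) *ᵥ v - v
      = (B * M) *ᵥ r - (B * (1 - γ • (M * P * B))) *ᵥ v := by
  simp only [mulVec_add, mulVec_smul, mulVec_mulVec, sub_mulVec, one_mulVec, Matrix.mul_sub,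
    Matrix.mul_one, Matrix.mul_smul, Matrix.mul_assoc, smul_mulVec]
  abel

end ForwardBackward

theorem stmt_11_general {S : Type*} [Fintype S] [DecidableEq S]
    (P : Matrix S S ℝ) (β : S → ℝ) (γ : ℝ) (d : S → ℝ) (k : ℕ) (Φ : Matrix S (Fin k) ℝ) (r : S → ℝ) :
    let B := diagonal β
    let Pβ := γ • ((1 - γ • (P * (1 - B)))⁻¹ * P * B)
    let A := Φᵀ * diagonal d * B * (1 - Pβ) * Φ
    let b := (Φᵀ * diagonal d * B * (1 - γ • (P * (1 - B)))⁻¹).mulVec r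
    let Tβ : (S → ℝ) → (S → ℝ) := fun v =>
      B.mulVec (((1 - γ • (P * (1 - B)))⁻¹).mulVec (r + γ • (P * B).mulVec v))
        + (1 - B).mulVec v
    ∀ w : Fin k → ℝ,
      b - A.mulVec w = (Φᵀ * diagonal d).mulVec (Tβ (Φ.mulVec w) - Φ.mulVec w) := by
  intro B Pβ A b Tβ w
  rw [forwardBackward_sub_self_eq, mulVec_sub, mulVec_mulVec, mulVec_mulVec, mulVec_mulVec]
  simp only [b, A, Pβ, Matrix.mul_assoc]

/-- forward–backward equivalence in expectation: with
`A = Φᵀ·D·B·(I − P^β)·Φ`, `b = Φᵀ·D·B·(I − γ·P·(I−B))⁻¹·r` and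
`T^β v = B·(I − γ·P·(I−B))⁻¹·(r + γ·P·B·v) + (I−B)·v`, for every `w`,
`b − A·w = Φᵀ·D·(T^β(Φ·w) − Φ·w)`. -/
theorem stmt_11 {S : Type*} [Fintype S] [Nonempty S] [DecidableEq S]
    (P : Matrix S S ℝ) (hP0 : ∀ s s', 0 ≤ P s s') (hP1 : ∀ s, ∑ s', P s s' = 1)
    (β : S → ℝ) (hβ0 : ∀ s, 0 ≤ β s) (hβ1 : ∀ s, β s ≤ 1)
    (γ : ℝ) (hγ0 : 0 ≤ γ) (hγ1 : γ < 1)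
    (d : S → ℝ) (k : ℕ) (hk : 0 < k) (Φ : Matrix S (Fin k) ℝ) (r : S → ℝ) :
    let B := diagonal β
    let Pβ := γ • ((1 - γ • (P * (1 - B)))⁻¹ * P * B)
    let A := Φᵀ * diagonal d * B * (1 - Pβ) * Φ
    let b := (Φᵀ * diagonal d * B * (1 - γ • (P * (1 - B)))⁻¹).mulVec r
    let Tβ : (S → ℝ) → (S → ℝ) := fun v =>
      B.mulVec (((1 - γ • (P * (1 - B)))⁻¹).mulVec (r + γ • (P * B).mulVec v))
        + (1 - B).mulVec v
    ∀ w : Fin k → ℝ,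
      b - A.mulVec w = (Φᵀ * diagonal d).mulVec (Tβ (Φ.mulVec w) - Φ.mulVec w) :=
  stmt_11_general P β γ d k Φ r
end

section
/- Let k be a positive integer, let A be a real k×k matrix satisfying wᵀ·A·w > 0 for every nonzero w ∈ ℝ^k, let b ∈ ℝ^k, and let (α_t)_{t≥0} be a sequence of nonnegative reals with Σ_{t=0}^∞ α_t = ∞ and Σ_{t=0}^∞ α_t² < ∞ (the Robbins–Monro conditions). Then for any initial w_0 ∈ ℝ^k, the sequence of expected updates defined by w_{t+1} = w_t + α_t·(b − A·w_t) converges to the unique vector w* ∈ ℝ^k with A·w* = b. -/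
/-! The error `e t = w t - w*` obeys `e (t + 1) = e t - α t • A (e t)`. The quadratic form
`x ↦ ⟪x, A x⟫` is positive on the compact unit sphere, hence bounded below there by some `μ > 0`,
so `‖e (t + 1)‖² ≤ (1 - 2 μ α t + ‖A‖² (α t)²) ‖e t‖² ≤ exp (-μ α t) ‖e t‖²` once `α t` is small.
Since `∑ α t = ∞`, the product of these factors tends to zero. -/

open Matrix Filter Topology

open scoped RealInnerProductSpace

lemma one_sub_mul_add_sq_le_exp {μ C a : ℝ} (ha : 0 ≤ a) (hCa : C * a ≤ μ) :
    1 - 2 * μ * a + C * a ^ 2 ≤ Real.exp (-(μ * a)) := by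
  have hlin : 1 - 2 * μ * a + C * a ^ 2 ≤ 1 - μ * a := by
    nlinarith [mul_le_mul_of_nonneg_right hCa ha]
  linarith [Real.add_one_le_exp (-(μ * a))]

lemma tendsto_zero_of_le_exp_neg_mul {V a : ℕ → ℝ} (hV : ∀ t, 0 ≤ V t)
    (ha : Tendsto (fun n => ∑ t ∈ Finset.range n, a t) atTop atTop)
    (hstep : ∀ᶠ t in atTop, V (t + 1) ≤ Real.exp (-a t) * V t) :
    Tendsto V atTop (𝓝 0) := by
  set S : ℕ → ℝ := fun n => ∑ t ∈ Finset.range n, a t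
  obtain ⟨T, hT⟩ := eventually_atTop.mp hstep
  have hmono : ∀ t, T ≤ t → V t * Real.exp (S t) ≤ V T * Real.exp (S T) := by
    intro t ht
    induction t, ht using Nat.le_induction with
    | base => rfl
    | succ t ht ih =>
      calc V (t + 1) * Real.exp (S (t + 1))
          ≤ Real.exp (-a t) * V t * Real.exp (S t + a t) := by
            simp only [S, Finset.sum_range_succ]
            gcongr
            exact hT t ht
        _ = V t * Real.exp (S t) := by
            rw [Real.exp_add, Real.exp_neg]
            field_simp
        _ ≤ V T * Real.exp (S T) := ih
  have hbound : ∀ᶠ t in atTop, V t ≤ V T * Real.exp (S T) * Real.exp (-S t) := by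
    filter_upwards [eventually_ge_atTop T] with t ht
    rw [Real.exp_neg, ← div_eq_mul_inv, le_div_iff₀ (Real.exp_pos _)]
    exact hmono t ht
  have hlim : Tendsto (fun t => V T * Real.exp (S T) * Real.exp (-S t)) atTop (𝓝 0) := by
    simpa using (Real.tendsto_exp_atBot.comp (tendsto_neg_atTop_atBot.comp ha)).const_mul
      (V T * Real.exp (S T))
  exact tendsto_of_tendsto_of_tendsto_of_le_of_le' tendsto_const_nhds hlim
    (Eventually.of_forall hV) hbound

section InnerProductSpace

variable {E : Type*} [NormedAddCommGroup E] [InnerProductSpace ℝ E]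

lemma exists_pos_mul_norm_sq_le_inner [FiniteDimensional ℝ E] (T : E →L[ℝ] E)
    (hT : ∀ x ≠ 0, 0 < ⟪x, T x⟫) : ∃ μ > 0, ∀ x, μ * ‖x‖ ^ 2 ≤ ⟪x, T x⟫ := by
  obtain ⟨μ, hμ, hμle⟩ := (isCompact_sphere (0 : E) 1).exists_forall_le'
    (by fun_prop : Continuous fun x => ⟪x, T x⟫).continuousOn
    fun x hx => hT x (ne_zero_of_mem_unit_sphere ⟨x, hx⟩)
  refine ⟨μ, hμ, fun x => ?_⟩
  rcases eq_or_ne x 0 with rfl | hx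
  · simp
  have hxn : 0 < ‖x‖ := norm_pos_iff.mpr hx
  have hu := hμle (‖x‖⁻¹ • x) (by simp [norm_smul, hxn.ne'])
  rw [map_smul, inner_smul_left, inner_smul_right] at hu
  simp only [conj_trivial] at hu
  calc μ * ‖x‖ ^ 2 ≤ ‖x‖⁻¹ * (‖x‖⁻¹ * ⟪x, T x⟫) * ‖x‖ ^ 2 := by gcongr
    _ = ⟪x, T x⟫ := by field_simp

lemma bijective_of_inner_pos [FiniteDimensional ℝ E] (T : E →L[ℝ] E)
    (hT : ∀ x ≠ 0, 0 < ⟪x, T x⟫) : Function.Bijective T := by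
  have hinj : Function.Injective T := by
    refine (injective_iff_map_eq_zero T).mpr fun x hx => ?_
    by_contra hne
    simpa [hx] using hT x hne
  exact ⟨hinj, (LinearMap.injective_iff_surjective (f := (T : E →ₗ[ℝ] E))).mp hinj⟩

lemma norm_sub_smul_sq_le (T : E →L[ℝ] E) {μ a : ℝ} (hT : ∀ x, μ * ‖x‖ ^ 2 ≤ ⟪x, T x⟫)
    (ha : 0 ≤ a) (x : E) :
    ‖x - a • T x‖ ^ 2 ≤ (1 - 2 * μ * a + ‖T‖ ^ 2 * a ^ 2) * ‖x‖ ^ 2 := by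
  have hTx : ‖a • T x‖ ≤ a * (‖T‖ * ‖x‖) := by
    rw [norm_smul, Real.norm_of_nonneg ha]
    exact mul_le_mul_of_nonneg_left (T.le_opNorm x) ha
  rw [norm_sub_sq_real, inner_smul_right]
  nlinarith [mul_le_mul_of_nonneg_left (hT x) ha,
    pow_le_pow_left₀ (norm_nonneg _) hTx 2]

lemma tendsto_zero_of_sub_smul_iterate (T : E →L[ℝ] E) {μ : ℝ} (hμ : 0 < μ)
    (hT : ∀ x, μ * ‖x‖ ^ 2 ≤ ⟪x, T x⟫) {α : ℕ → ℝ} (hα0 : ∀ t, 0 ≤ α t)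
    (hα : Tendsto α atTop (𝓝 0))
    (hdiv : Tendsto (fun n => ∑ t ∈ Finset.range n, α t) atTop atTop)
    {e : ℕ → E} (he : ∀ t, e (t + 1) = e t - α t • T (e t)) :
    Tendsto e atTop (𝓝 0) := by
  have hsmall : ∀ᶠ t in atTop, ‖T‖ ^ 2 * α t ≤ μ := by
    have hlim : Tendsto (fun t => ‖T‖ ^ 2 * α t) atTop (𝓝 0) := by
      simpa using hα.const_mul (‖T‖ ^ 2)
    exact hlim.eventually (eventually_le_nhds hμ)
  have hsq : Tendsto (fun t => ‖e t‖ ^ 2) atTop (𝓝 0) := by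
    refine tendsto_zero_of_le_exp_neg_mul (a := fun t => μ * α t) (fun t => sq_nonneg _) ?_ ?_
    · simpa [← Finset.mul_sum] using hdiv.const_mul_atTop hμ
    · filter_upwards [hsmall] with t ht
      rw [he]
      exact (norm_sub_smul_sq_le T hT (hα0 t) _).trans
        (mul_le_mul_of_nonneg_right (one_sub_mul_add_sq_le_exp (hα0 t) ht) (sq_nonneg _))
  rw [tendsto_zero_iff_norm_tendsto_zero]
  simpa using hsq.sqrt

end InnerProductSpace

theorem stmt_13_general (k : ℕ) (A : Matrix (Fin k) (Fin k) ℝ)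
    (hA : ∀ x : Fin k → ℝ, x ≠ 0 → 0 < x ⬝ᵥ A.mulVec x)
    (b : Fin k → ℝ) (α : ℕ → ℝ) (hα0 : ∀ t, 0 ≤ α t)
    (hdiv : Tendsto (fun n => ∑ t ∈ Finset.range n, α t) atTop atTop)
    (hsq : Summable fun t => (α t) ^ 2)
    (w : ℕ → Fin k → ℝ)
    (hrec : ∀ t, w (t + 1) = w t + α t • (b - A.mulVec (w t))) :
    ∃ wstar : Fin k → ℝ, A.mulVec wstar = b ∧
      (∀ w' : Fin k → ℝ, A.mulVec w' = b → w' = wstar) ∧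
      Tendsto w atTop (𝓝 wstar) := by
  set T := toEuclideanCLM (n := Fin k) (𝕜 := ℝ) A
  have hT : ∀ x ≠ 0, 0 < ⟪x, T x⟫ := fun x hx => by
    rw [inner_toEuclideanCLM]
    exact hA _ (by simpa using hx)
  obtain ⟨hinj, hsurj⟩ := bijective_of_inner_pos T hT
  obtain ⟨v, hv⟩ := hsurj (WithLp.toLp 2 b)
  have hsol : A *ᵥ v.ofLp = b := by
    rw [← ofLp_toEuclideanCLM, hv]
  refine ⟨v.ofLp, hsol, fun w' hw' => ?_, ?_⟩
  · have : T (WithLp.toLp 2 w') = T v := by rw [hv, toEuclideanCLM_toLp, hw']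
    simpa using congrArg WithLp.ofLp (hinj this)
  obtain ⟨μ, hμ, hcoer⟩ := exists_pos_mul_norm_sq_le_inner T hT
  have hα : Tendsto α atTop (𝓝 0) := by
    simpa [Real.sqrt_sq (hα0 _)] using hsq.tendsto_atTop_zero.sqrt
  have herr : Tendsto (fun t => WithLp.toLp 2 (w t) - v) atTop (𝓝 0) := by
    refine tendsto_zero_of_sub_smul_iterate T hμ hcoer hα0 hα hdiv fun t => ?_
    rw [hrec, map_sub, hv]
    ext i
    simp only [WithLp.toLp_add, WithLp.toLp_smul, WithLp.toLp_sub, PiLp.sub_apply, PiLp.add_apply,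
      PiLp.smul_apply, smul_eq_mul, toEuclideanCLM_toLp, T]
    ring
  simpa [Function.comp_def] using ((PiLp.continuous_ofLp 2 _).tendsto _).comp (herr.add_const v)

/-- deterministic core of the convergence theorem: if `A` is positive
definite in the sense that `wᵀ·A·w > 0` for all nonzero `w`, and the step sizes satisfy
the Robbins–Monro conditions, then for any initialization the expected-update recursion
`w_{t+1} = w_t + α_t·(b − A·w_t)` converges to the unique `w*` with `A·w* = b`. -/
theorem stmt_13 (k : ℕ) (hk : 0 < k) (A : Matrix (Fin k) (Fin k) ℝ)
    (hA : ∀ x : Fin k → ℝ, x ≠ 0 → 0 < x ⬝ᵥ A.mulVec x)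
    (b : Fin k → ℝ) (α : ℕ → ℝ) (hα0 : ∀ t, 0 ≤ α t)
    (hdiv : Tendsto (fun n => ∑ t ∈ Finset.range n, α t) atTop atTop)
    (hsq : Summable fun t => (α t) ^ 2)
    (w : ℕ → Fin k → ℝ)
    (hrec : ∀ t, w (t + 1) = w t + α t • (b - A.mulVec (w t))) :
    ∃ wstar : Fin k → ℝ, A.mulVec wstar = b ∧
      (∀ w' : Fin k → ℝ, A.mulVec w' = b → w' = wstar) ∧
      Tendsto w atTop (𝓝 wstar) :=
  stmt_13_general k A hA b α hα0 hdiv hsq w hrec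
end

section
/- Let 0 ≤ γ < 1, let d : S → ℝ with D the diagonal matrix D(s,s) = d(s), let Φ : Matrix S (Fin k) ℝ, and suppose (D_t)_{t≥0} is a sequence of S×S diagonal matrices such that there exist constants C ≥ 0 and 0 ≤ ρ < 1 with ‖D_t − D‖ ≤ C·ρ^t for all t (operator norm induced by the Euclidean norm). For each t define M_t = Φᵀ·B·D_t·(I − P^β)·Φ − Φᵀ·B·D_t·(Σ_{m=t+1}^∞ (γ·P·(I−B))^m)·(I − γ·P)·Φ, and let M = Φᵀ·B·D·(I − P^β)·Φ. Then Σ_{t=0}^∞ ‖M_t − M‖ < ∞; i.e., the bias of the time-t expected update matrices relative to their stationary limit is summable. -/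
/-!
With `Q = γ P (I - B)` and `T_t = ∑_{m > t} Q^m`,
`M_t - M = Φᵀ B (D_t - D) (I - P^β) Φ - Φᵀ B D_t T_t (I - γ P) Φ`.
The rows of `|Q|` sum to at most `γ < 1`, so `Q` is a contraction for the `ℓ^∞` operator norm
and `∑ Q^m` converges; in finite dimension a convergent series is absolutely convergent for any
norm, so `‖T_t‖ ≤ ‖∑ Q^m‖ ‖Q^{t+1}‖` is summable. The first term is summable because
`‖D_t - D‖ ≤ C ρ^t`, and `D_t` stays bounded.
-/

open Matrix

/-- The operator norm of a square real matrix induced by the Euclidean norm. -/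
noncomputable def euclOpNorm {n : Type*} [Fintype n] [DecidableEq n]
    (M : Matrix n n ℝ) : ℝ :=
  ‖Matrix.toEuclideanCLM (𝕜 := ℝ) M‖

section
variable {n : Type*} [Fintype n] [DecidableEq n]

theorem summable_pow_of_sum_abs_lt_one {Q : Matrix n n ℝ} (hQ : ∀ i, ∑ j, |Q i j| < 1) :
    Summable (Q ^ ·) := by
  open scoped Matrix.Norms.Operator in
  refine summable_geometric_of_norm_lt_one ?_
  rw [← NNReal.coe_one, linfty_opNorm_def, NNReal.coe_lt_coe, Finset.sup_lt_iff zero_lt_one]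
  intro i _
  rw [← NNReal.coe_lt_coe]
  simpa using hQ i

theorem sum_abs_smul_mul_one_sub_diagonal_le {P : Matrix n n ℝ} {β : n → ℝ} {γ : ℝ}
    (hP0 : ∀ i j, 0 ≤ P i j) (hP1 : ∀ i, ∑ j, P i j ≤ 1)
    (hβ0 : ∀ j, 0 ≤ β j) (hβ1 : ∀ j, β j ≤ 1) (hγ : 0 ≤ γ) (i : n) :
    ∑ j, |(γ • (P * (1 - diagonal β))) i j| ≤ γ := by
  have hentry : ∀ j, (γ • (P * (1 - diagonal β))) i j = γ * (P i j * (1 - β j)) := fun j => by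
    simp only [Matrix.smul_apply, Matrix.mul_sub, Matrix.mul_one, Matrix.sub_apply, mul_diagonal,
      smul_eq_mul]
    ring
  calc ∑ j, |(γ • (P * (1 - diagonal β))) i j| ≤ ∑ j, γ * P i j := by
        refine Finset.sum_le_sum fun j _ => ?_
        have hdisc : 0 ≤ 1 - β j := sub_nonneg.mpr (hβ1 j)
        rw [hentry, abs_of_nonneg (mul_nonneg hγ (mul_nonneg (hP0 i j) hdisc))]
        exact mul_le_mul_of_nonneg_left
          (mul_le_of_le_one_right (hP0 i j) (sub_le_self _ (hβ0 j))) hγ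
    _ ≤ γ := by
        rw [← Finset.mul_sum]
        exact mul_le_of_le_one_right hγ (hP1 i)

end

theorem summable_norm_tsum_pow_add {R : Type*} [NormedRing R] [NormedSpace ℝ R]
    [FiniteDimensional ℝ R] {x : R} (hx : Summable (x ^ ·)) :
    Summable fun t : ℕ => ‖∑' m : ℕ, x ^ (m + (t + 1))‖ := by
  have hnorm : Summable fun t : ℕ => ‖x ^ (t + 1)‖ :=
    (summable_nat_add_iff 1).mpr (summable_norm_iff.mpr hx)
  refine .of_nonneg_of_le (fun _ => norm_nonneg _) (fun t => ?_)
    (hnorm.mul_left ‖∑' m : ℕ, x ^ m‖)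
  simp only [pow_add]
  rw [hx.tsum_mul_right]
  exact norm_mul_le _ _

theorem Summable.norm_sub_sub {ι E : Type*} [SeminormedAddCommGroup E] {X Y : ι → E} {x : E}
    (hX : Summable fun i => ‖X i - x‖) (hY : Summable fun i => ‖Y i‖) :
    Summable fun i => ‖X i - Y i - x‖ :=
  .of_nonneg_of_le (fun _ => norm_nonneg _)
    (fun i => by rw [sub_right_comm]; exact norm_sub_le _ _) (hX.add hY)

theorem Summable.norm_mul_of_norm_le {ι R : Type*} [NonUnitalSeminormedRing R] {X Y : ι → R}
    {K : ℝ} (hX : ∀ i, ‖X i‖ ≤ K) (hY : Summable fun i => ‖Y i‖) :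
    Summable fun i => ‖X i * Y i‖ :=
  .of_nonneg_of_le (fun _ => norm_nonneg _)
    (fun i => (norm_mul_le _ _).trans (mul_le_mul_of_nonneg_right (hX i) (norm_nonneg _)))
    (hY.mul_left K)

theorem norm_le_norm_add_tsum_norm_sub {E : Type*} [SeminormedAddCommGroup E] {X : ℕ → E} {x : E}
    (hX : Summable fun t => ‖X t - x‖) (t : ℕ) : ‖X t‖ ≤ ‖x‖ + ∑' s, ‖X s - x‖ :=
  (norm_le_norm_add_norm_sub' _ x).trans
    (add_le_add_right (hX.le_tsum t fun _ _ => norm_nonneg _) _)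

namespace Matrix
open scoped Norms.L2Operator
variable {l m n p : Type*} [Fintype l] [Fintype m] [Fintype n] [Fintype p]
  [DecidableEq m] [DecidableEq n] [DecidableEq p]

theorem summable_l2_opNorm_mul_mul (A : Matrix l m ℝ) (E : Matrix n p ℝ) {X : ℕ → Matrix m n ℝ}
    (hX : Summable fun t => ‖X t‖) : Summable fun t => ‖A * X t * E‖ :=
  .of_nonneg_of_le (fun _ => norm_nonneg _)
    (fun _ => (l2_opNorm_mul _ _).trans
      (mul_le_mul_of_nonneg_right (l2_opNorm_mul _ _) (norm_nonneg _)))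
    ((hX.mul_left ‖A‖).mul_right ‖E‖)

theorem summable_l2_opNorm_mul_mul_sub (A : Matrix l m ℝ) (E : Matrix n p ℝ)
    {X : ℕ → Matrix m n ℝ} {x : Matrix m n ℝ} (hX : Summable fun t => ‖X t - x‖) :
    Summable fun t => ‖A * X t * E - A * x * E‖ := by
  simpa only [← Matrix.mul_sub, ← Matrix.sub_mul] using summable_l2_opNorm_mul_mul A E hX

end Matrix

theorem stmt_15_general {S : Type*} [Fintype S] [DecidableEq S]
    (P : Matrix S S ℝ) (hP0 : ∀ s s', 0 ≤ P s s') (hP1 : ∀ s, ∑ s', P s s' = 1)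
    (β : S → ℝ) (hβ0 : ∀ s, 0 ≤ β s) (hβ1 : ∀ s, β s ≤ 1)
    (γ : ℝ) (hγ0 : 0 ≤ γ) (hγ1 : γ < 1)
    (d : S → ℝ) (k : ℕ) (Φ : Matrix S (Fin k) ℝ)
    (dseq : ℕ → S → ℝ) (C ρ : ℝ) (hρ0 : 0 ≤ ρ) (hρ1 : ρ < 1)
    (hmix : ∀ t : ℕ, euclOpNorm (diagonal (dseq t) - diagonal d) ≤ C * ρ ^ t) :
    let B := diagonal β
    let Q := γ • (P * (1 - B))
    let Pβ := γ • ((1 - Q)⁻¹ * P * B)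
    let Mt : ℕ → Matrix (Fin k) (Fin k) ℝ := fun t =>
      Φᵀ * B * diagonal (dseq t) * (1 - Pβ) * Φ -
        Φᵀ * B * diagonal (dseq t) * (∑' m : ℕ, Q ^ (m + (t + 1))) * (1 - γ • P) * Φ
    let M := Φᵀ * B * diagonal d * (1 - Pβ) * Φ
    Summable fun t : ℕ => euclOpNorm (Mt t - M) := by
  intro B Q Pβ Mt M
  open scoped Matrix.Norms.L2Operator in
  have hQ : Summable (Q ^ ·) := summable_pow_of_sum_abs_lt_one fun i =>
    (sum_abs_smul_mul_one_sub_diagonal_le hP0 (fun s => (hP1 s).le) hβ0 hβ1 hγ0 i).trans_lt hγ1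
  have hD : Summable fun t => ‖diagonal (dseq t) - diagonal d‖ :=
    .of_nonneg_of_le (fun _ => norm_nonneg _) hmix
      ((summable_geometric_of_lt_one hρ0 hρ1).mul_left C)
  have hDT : Summable fun t => ‖diagonal (dseq t) * ∑' m : ℕ, Q ^ (m + (t + 1))‖ :=
    Summable.norm_mul_of_norm_le (norm_le_norm_add_tsum_norm_sub hD)
      (summable_norm_tsum_pow_add hQ)
  have h1 := summable_l2_opNorm_mul_mul_sub (Φᵀ * B) ((1 - Pβ) * Φ) hD
  have h2 := summable_l2_opNorm_mul_mul (Φᵀ * B) ((1 - γ • P) * Φ) hDT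
  refine (h1.norm_sub_sub h2).congr fun t => ?_
  rw [euclOpNorm, ← cstar_norm_def]
  simp only [Mt, M, Matrix.mul_assoc]

/-- if the time-`t` state-occupancy diagonal matrices `D_t` converge to
`D` geometrically (`‖D_t − D‖ ≤ C·ρ^t`), then the bias of the time-`t` expected update
matrices `M_t = Φᵀ·B·D_t·(I − P^β)·Φ − Φᵀ·B·D_t·(Σ_{m=t+1}^∞ (γ·P·(I−B))^m)·(I − γ·P)·Φ`
relative to the stationary limit `M = Φᵀ·B·D·(I − P^β)·Φ` is summable:
`Σ_t ‖M_t − M‖ < ∞`. -/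
theorem stmt_15 {S : Type*} [Fintype S] [Nonempty S] [DecidableEq S]
    (P : Matrix S S ℝ) (hP0 : ∀ s s', 0 ≤ P s s') (hP1 : ∀ s, ∑ s', P s s' = 1)
    (β : S → ℝ) (hβ0 : ∀ s, 0 ≤ β s) (hβ1 : ∀ s, β s ≤ 1)
    (γ : ℝ) (hγ0 : 0 ≤ γ) (hγ1 : γ < 1)
    (d : S → ℝ) (k : ℕ) (hk : 0 < k) (Φ : Matrix S (Fin k) ℝ)
    (dseq : ℕ → S → ℝ) (C ρ : ℝ) (hC : 0 ≤ C) (hρ0 : 0 ≤ ρ) (hρ1 : ρ < 1)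
    (hmix : ∀ t : ℕ, euclOpNorm (diagonal (dseq t) - diagonal d) ≤ C * ρ ^ t) :
    let B := diagonal β
    let Q := γ • (P * (1 - B))
    let Pβ := γ • ((1 - Q)⁻¹ * P * B)
    let Mt : ℕ → Matrix (Fin k) (Fin k) ℝ := fun t =>
      Φᵀ * B * diagonal (dseq t) * (1 - Pβ) * Φ -
        Φᵀ * B * diagonal (dseq t) * (∑' m : ℕ, Q ^ (m + (t + 1))) * (1 - γ • P) * Φ
    let M := Φᵀ * B * diagonal d * (1 - Pβ) * Φ
    Summable fun t : ℕ => euclOpNorm (Mt t - M) :=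
  stmt_15_general P hP0 hP1 β hβ0 hβ1 γ hγ0 hγ1 d k Φ dseq C ρ hρ0 hρ1 hmix
end
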